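/- arXiv:1107.2429 — 6 statements merged into one kernel-verified Lean document; each statement's English description precedes it below -/
import Mathlib

section
/- Let R be a ring with prime subring P (the subring of R generated by 1), let M be a submonoid of the group of units U(R), and let C be a subring of R. Assume: (1) distinct elements of M are linearly independent over P in R (equivalently, the subring of R generated by P and M is the monoid ring P[M]); (2) for every c ∈ C and every element f of the subring of R generated by P and M, the equality cf = 0 implies c = 0 or f = 0; (3) every element of M commutes with every element of C; (4) M is an orderable monoid; (5) there exist a group H and an injective monoid homomorphism M → H such that the subgroup of H generated by the image of M has trivial center. Then distinct elements of M are linearly independent over C in R; equivalently, the subring of R generated by C and M is the monoid ring C[M], i.e., the canonical ring homomorphism from the monoid ring C[M] to R extending the inclusions of C and of M is injective. -/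
/-!
Let `P` be the prime subring; by (1) the monoid ring `P[M]` embeds in `R`, and it suffices to show
that a relation `∑ fᵢ cᵢ = 0` with `fᵢ ∈ P[M]` linearly independent over `P` and `cᵢ ∈ C` is
trivial. This goes by induction on the number of terms. As `C` commutes with `P[M]`, for every
`w ∈ P[M]` the elements `f₀ w fᵢ - fᵢ w f₀` (`i ≥ 1`) satisfy a shorter relation with the same
coefficients. If they are independent for some `w`, induction applies; otherwise for every `w`
some nonzero `F` in the span of `f₁, …, fₙ` satisfies `f₀ w F = F w f₀`, and this forces a nonzero
multiple of `f₀` into that span.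

For the latter, order `M` and compare leading monomials: `f₀ m F = F m f₀` gives `u m v = v m u`
for the leading monomials `u` of `f₀` and `v` of `F`. By (5), `u m v = v m u` for all but finitely
many `m` forces `u = v`, so each monomial `t ≠ u` occurring in `f₀, …, fₙ` has infinitely many
witnesses `m` with `u m t ≠ t m u`. Choosing one witness per `t` with pairwise disjoint bands
`Σ m Σ` (`Σ` the joint support) and taking `w` to be their sum, the equation `f₀ w F = F w f₀`
splits into the equations `f₀ m F = F m f₀`. Hence `F` has leading monomial `u`, and the same
argument kills `lc(F) f₀ - lc(f₀) F`.
-/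

/-- Distinct elements of `S ⊆ R` are linearly independent over the subring `C` of `R`:
whenever `s₁, …, sₙ ∈ S` are pairwise distinct, `c₁, …, cₙ ∈ C` and
`s₁c₁ + ⋯ + sₙcₙ = 0`, then `c₁ = ⋯ = cₙ = 0`. -/
def LinIndepOver (R : Type*) [Ring R] (C : Subring R) (S : Set R) : Prop :=
  ∀ (n : ℕ) (s : Fin n → R) (c : Fin n → C), (∀ i, s i ∈ S) → Function.Injective s →
    (∑ i, s i * (c i : R)) = 0 → ∀ i, c i = 0

open Filter Finset

theorem Finsupp.eq_zero_of_sum_eq_zero_of_pairwiseDisjoint {ι α M : Type*}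
    [AddCommMonoid M] {U : Finset ι} {x : ι → α →₀ M} {B : ι → Finset α}
    (hB : ∀ i ∈ U, (x i).support ⊆ B i) (hd : (U : Set ι).PairwiseDisjoint B)
    (h : ∑ i ∈ U, x i = 0) {i : ι} (hi : i ∈ U) : x i = 0 := by
  ext a
  by_cases ha : a ∈ (x i).support
  · have hothers : ∀ j ∈ U, j ≠ i → x j a = 0 := fun j hj hji =>
      Finsupp.notMem_support_iff.mp fun haj =>
        Finset.disjoint_left.mp (hd hj hi hji) (hB j hj haj) (hB i hi ha)
    rw [Finsupp.zero_apply, ← Finset.sum_eq_single_of_mem i hi hothers,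
      ← Finsupp.finsetSum_apply, h, Finsupp.zero_apply]
  · exact Finsupp.notMem_support_iff.mp ha

theorem exists_finset_pairwise_forall_exists_mem {α ι : Type*} {r : α → α → Prop}
    (hr : ∀ a, ∀ᶠ b in cofinite, r a b ∧ r b a) (T : Finset ι) {B : ι → Set α}
    (hB : ∀ i ∈ T, (B i).Infinite) :
    ∃ U : Finset α, (U : Set α).Pairwise r ∧ ∀ i ∈ T, ∃ m ∈ U, m ∈ B i := by
  classical
  induction T using Finset.induction_on with
  | empty => exact ⟨∅, by simp, by simp⟩
  | insert i T _ ih =>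
    obtain ⟨U, hU, hUB⟩ := ih fun j hj => hB j (mem_insert_of_mem hj)
    obtain ⟨m, hmB, hmU⟩ := ((frequently_cofinite_iff_infinite.mpr
      (hB i (mem_insert_self i T))).and_eventually ((U.eventually_all).mpr fun a _ => hr a)).exists
    refine ⟨insert m U, ?_, fun j hj => ?_⟩
    · rw [coe_insert, Set.pairwise_insert]
      exact ⟨hU, fun b hb _ => (hmU b hb).symm⟩
    · rcases mem_insert.mp hj with rfl | hj
      · exact ⟨m, mem_insert_self m U, hmB⟩
      · obtain ⟨m', hm'U, hm'B⟩ := hUB j hj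
        exact ⟨m', mem_insert_of_mem hm'U, hm'B⟩

theorem eq_of_eventually_mul_mul_eq {G H : Type*} [Monoid G] [Infinite G] [Group H] {φ : G →* H}
    (hφ : Function.Injective φ) (hZ : Subgroup.center (Subgroup.closure (Set.range φ)) = ⊥)
    {u v : G} (h : ∀ᶠ m in cofinite, u * m * v = v * m * u) : u = v := by
  have hcomm : ∀ x : G, Commute (φ x) ((φ u)⁻¹ * φ v) := by
    intro x
    have hx : Function.Injective (x * ·) := fun m m' e =>
      hφ (mul_left_cancel (by simpa only [map_mul] using congrArg φ e))
    obtain ⟨m, hm, hxm⟩ := (h.and (hx.tendsto_cofinite.eventually h)).exists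
    replace hm := congrArg φ hm
    replace hxm := congrArg φ hxm
    simp only [map_mul] at hm hxm
    have key : φ u * φ x * (φ u)⁻¹ * φ v = φ v * φ x := by
      refine mul_right_cancel (b := φ m * φ u) ?_
      calc φ u * φ x * (φ u)⁻¹ * φ v * (φ m * φ u)
          = φ u * φ x * (φ u)⁻¹ * (φ v * φ m * φ u) := by group
        _ = φ u * (φ x * φ m) * φ v := by rw [← hm]; group
        _ = φ v * φ x * (φ m * φ u) := by rw [hxm]; group
    calc φ x * ((φ u)⁻¹ * φ v) = (φ u)⁻¹ * (φ u * φ x * (φ u)⁻¹ * φ v) := by group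
      _ = (φ u)⁻¹ * φ v * φ x := by rw [key]; group
  set q := (φ u)⁻¹ * φ v
  have hq : q ∈ Subgroup.closure (Set.range φ) :=
    mul_mem (inv_mem (Subgroup.subset_closure ⟨u, rfl⟩)) (Subgroup.subset_closure ⟨v, rfl⟩)
  have hqc : q ∈ Subgroup.centralizer (Subgroup.closure (Set.range φ) : Set H) := by
    rw [Subgroup.centralizer_closure]
    rintro _ ⟨x, rfl⟩
    exact (hcomm x).eq
  have hqZ : (⟨q, hq⟩ : Subgroup.closure (Set.range φ)) ∈
      Subgroup.center (Subgroup.closure (Set.range φ)) :=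
    Subgroup.mem_center_iff.mpr fun g => Subtype.ext (Subgroup.mem_centralizer_iff.mp hqc g g.2)
  rw [hZ, Subgroup.mem_bot] at hqZ
  exact hφ (inv_mul_eq_one.mp (congrArg Subtype.val hqZ))

theorem infinite_of_mulLeftStrictMono (G : Type*) [Monoid G] [LinearOrder G] [MulLeftStrictMono G]
    [Nontrivial G] : Infinite G := by
  obtain ⟨a, ha⟩ := exists_ne (1 : G)
  rcases ha.lt_or_gt with h | h
  · exact Infinite.of_injective _ (pow_right_strictMono' (M := Gᵒᵈ) h).injective
  · exact Infinite.of_injective _ (pow_right_strictMono' h).injective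

namespace MonoidAlgebra

open scoped Pointwise

section LeadingMonomial

variable {k G : Type*} [Semiring k] [Monoid G] [LinearOrder G]

theorem exists_isGreatest_support {f : MonoidAlgebra k G} (hf : f ≠ 0) :
    ∃ a, IsGreatest (f.coeff.support : Set G) a :=
  ⟨_, f.coeff.support.isGreatest_max'
    (Finsupp.support_nonempty_iff.mpr (coeff_eq_zero.not.mpr hf))⟩

variable [MulLeftStrictMono G] [MulRightStrictMono G]

theorem isGreatest_support_coeff_mul [NoZeroDivisors k] {f g : MonoidAlgebra k G} {a b : G}
    (ha : IsGreatest (f.coeff.support : Set G) a) (hb : IsGreatest (g.coeff.support : Set G) b) :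
    IsGreatest ((f * g).coeff.support : Set G) (a * b) := by
  classical
  have := mulLeftMono_of_mulLeftStrictMono G
  have := mulRightMono_of_mulRightStrictMono G
  have hunique : UniqueMul f.coeff.support g.coeff.support a b := by
    intro a' b' ha' hb' he
    rcases (ha.2 ha').lt_or_eq with ha'a | rfl
    · exact absurd he (mul_lt_mul_of_lt_of_le ha'a (hb.2 hb')).ne
    rcases (hb.2 hb').lt_or_eq with hb'b | rfl
    · exact absurd he (mul_lt_mul_right hb'b a').ne
    · exact ⟨rfl, rfl⟩
  refine ⟨?_, fun t ht => ?_⟩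
  · rw [Finset.mem_coe, Finsupp.mem_support_iff, coeff_mul_mul_of_uniqueMul hunique]
    exact mul_ne_zero (Finsupp.mem_support_iff.mp ha.1) (Finsupp.mem_support_iff.mp hb.1)
  · obtain ⟨a', ha', b', hb', rfl⟩ := Finset.mem_mul.mp (support_coeff_mul_subset f g ht)
    exact mul_le_mul' (ha.2 ha') (hb.2 hb')

theorem mul_mul_eq_of_mul_single_mul_eq [NoZeroDivisors k] [Nontrivial k]
    {f g : MonoidAlgebra k G} {a b m : G}
    (ha : IsGreatest (f.coeff.support : Set G) a) (hb : IsGreatest (g.coeff.support : Set G) b)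
    (h : f * single m 1 * g = g * single m 1 * f) : a * m * b = b * m * a := by
  have hm : IsGreatest ((single m (1 : k)).coeff.support : Set G) m := by
    simp [coeff_single]
  exact (isGreatest_support_coeff_mul (isGreatest_support_coeff_mul ha hm) hb).unique
    (h ▸ isGreatest_support_coeff_mul (isGreatest_support_coeff_mul hb hm) ha)

theorem mem_support_of_forall_mul_single_mul_eq [NoZeroDivisors k] [Nontrivial k]
    {f g : MonoidAlgebra k G} {u : G} (hu : IsGreatest (f.coeff.support : Set G) u) {U : Set G}
    (hU : ∀ t ∈ g.coeff.support, t ≠ u → ∃ m ∈ U, u * m * t ≠ t * m * u) (hg : g ≠ 0)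
    (h : ∀ m ∈ U, f * single m 1 * g = g * single m 1 * f) : u ∈ g.coeff.support := by
  obtain ⟨b, hb⟩ := exists_isGreatest_support hg
  obtain rfl : b = u := by
    by_contra hbu
    obtain ⟨m, hmU, hm⟩ := hU b hb.1 hbu
    exact hm (mul_mul_eq_of_mul_single_mul_eq hu hb (h m hmU))
  exact hb.1

end LeadingMonomial

section Separation

variable {k G : Type*} [Ring k] [Monoid G] [DecidableEq G]

theorem support_coeff_mul_single_mul_subset (f g : MonoidAlgebra k G) (m : G) :
    (f * single m 1 * g).coeff.support ⊆ f.coeff.support * {m} * g.coeff.support :=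
  (support_coeff_mul_subset _ g).trans <| Finset.mul_subset_mul_right <|
    (support_coeff_mul_subset f _).trans (Finset.mul_subset_mul_left Finsupp.support_single_subset)

theorem mul_single_mul_eq_of_pairwiseDisjoint {s U : Finset G}
    (hU : (U : Set G).PairwiseDisjoint fun m => s * {m} * s) {f g : MonoidAlgebra k G}
    (hf : f ∈ supported k k (s : Set G)) (hg : g ∈ supported k k (s : Set G))
    (h : f * (∑ m ∈ U, single m 1) * g = g * (∑ m ∈ U, single m 1) * f) {m : G}
    (hm : m ∈ U) : f * single m 1 * g = g * single m 1 * f := by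
  rw [mem_supported, Finset.coe_subset] at hf hg
  have hband : ∀ m ∈ U,
      (f * single m 1 * g - g * single m 1 * f).coeff.support ⊆ s * {m} * s :=
    fun m _ => coeff_sub (R := k) _ _ ▸ Finsupp.support_sub.trans (Finset.union_subset
      ((support_coeff_mul_single_mul_subset f g m).trans (by gcongr))
      ((support_coeff_mul_single_mul_subset g f m).trans (by gcongr)))
  have hsum : ∑ m ∈ U, (f * single m 1 * g - g * single m 1 * f).coeff = 0 := by
    simp only [← coeff_sum, Finset.sum_sub_distrib, ← Finset.sum_mul, ← Finset.mul_sum, h,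
      sub_self, coeff_zero]
  exact sub_eq_zero.mp (coeff_eq_zero.mp
    (Finsupp.eq_zero_of_sum_eq_zero_of_pairwiseDisjoint hband hU hsum hm))

theorem eventually_disjoint_mul_singleton_mul [IsLeftCancelMul G] [IsRightCancelMul G]
    (s : Finset G) (a : G) : ∀ᶠ b in cofinite, Disjoint (s * {a} * s) (s * {b} * s) := by
  have hinj : ∀ p q : G, Function.Injective fun b => p * b * q := fun p q b b' e =>
    mul_left_cancel (mul_right_cancel e)
  refine (s.finite_toSet.biUnion fun p _ => s.finite_toSet.biUnion fun q _ =>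
    (s * {a} * s).finite_toSet.preimage (hinj p q).injOn).subset fun b hb => ?_
  obtain ⟨t, hta, htb⟩ := Finset.not_disjoint_iff.mp hb
  obtain ⟨_, ⟨p, hp, _, rfl, rfl⟩, q, hq, rfl⟩ := by simpa only [Finset.mem_mul,
    Finset.mem_singleton, exists_eq_left] using htb
  exact Set.mem_biUnion hp (Set.mem_biUnion hq hta)

end Separation

section Rigidity

variable {k G : Type*} [CommRing k]

theorem exists_finset_mem_supported_and_le_supported (f : MonoidAlgebra k G)
    {V : Submodule k (MonoidAlgebra k G)} (hV : V.FG) :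
    ∃ s : Finset G, f ∈ supported k k (s : Set G) ∧ V ≤ supported k k (s : Set G) := by
  classical
  obtain ⟨S, rfl⟩ := hV
  have hsub : ∀ x ∈ insert f S,
      x ∈ supported k k ((insert f S).biUnion (·.coeff.support) : Set G) := fun x hx =>
    mem_supported.mpr (Finset.coe_subset.mpr (Finset.subset_biUnion_of_mem (·.coeff.support) hx))
  exact ⟨_, hsub f (Finset.mem_insert_self f S),
    Submodule.span_le.mpr fun x hx => hsub x (Finset.mem_insert_of_mem hx)⟩

theorem exists_smul_mem_of_forall_exists_mul_mul_eq [IsDomain k] [Monoid G] [LinearOrder G]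
    [MulLeftStrictMono G] [MulRightStrictMono G]
    (htwist : ∀ u v : G, (∀ᶠ m in cofinite, u * m * v = v * m * u) → u = v)
    {f : MonoidAlgebra k G} (hf : f ≠ 0) {V : Submodule k (MonoidAlgebra k G)} (hV : V.FG)
    (h : ∀ w, ∃ F ∈ V, F ≠ 0 ∧ f * w * F = F * w * f) :
    ∃ d : k, d ≠ 0 ∧ d • f ∈ V := by
  classical
  have := MulLeftStrictMono.toIsLeftCancelMul (α := G)
  have := MulRightStrictMono.toIsRightCancelMul (α := G)
  obtain ⟨s, hfs, hVs⟩ := exists_finset_mem_supported_and_le_supported f hV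
  obtain ⟨u, hu⟩ := exists_isGreatest_support hf
  have hsep : ∀ t ∈ s.erase u, {m | u * m * t ≠ t * m * u}.Infinite := by
    intro t ht
    refine frequently_cofinite_iff_infinite.mp fun hev => Finset.ne_of_mem_erase ht ?_
    exact (htwist u t (hev.mono fun _ => not_not.mp)).symm
  have hdisj (a : G) : ∀ᶠ b in cofinite,
      Disjoint (s * {a} * s) (s * {b} * s) ∧ Disjoint (s * {b} * s) (s * {a} * s) :=
    (eventually_disjoint_mul_singleton_mul s a).mono fun _ h => ⟨h, h.symm⟩
  obtain ⟨U, hU, hUsep⟩ := exists_finset_pairwise_forall_exists_mem hdisj (s.erase u) hsep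
  have hlead : ∀ g ∈ supported k k (s : Set G), g ≠ 0 →
      (∀ m ∈ U, f * single m 1 * g = g * single m 1 * f) → u ∈ g.coeff.support :=
    fun g hgs => mem_support_of_forall_mul_single_mul_eq (U := U) hu fun t ht htu =>
      hUsep t (Finset.mem_erase.mpr ⟨htu, mem_supported.mp hgs ht⟩)
  obtain ⟨F, hFV, hF0, hFw⟩ := h (∑ m ∈ U, single m 1)
  have hFs := hVs hFV
  have hFU : ∀ m ∈ U, f * single m 1 * F = F * single m 1 * f :=
    fun m hm => mul_single_mul_eq_of_pairwiseDisjoint hU hfs hFs hFw hm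
  have hFu : F.coeff u ≠ 0 := Finsupp.mem_support_iff.mp (hlead F hFs hF0 hFU)
  refine ⟨F.coeff u, hFu, ?_⟩
  -- `D` commutes with `f` over `U` as well but has no coefficient at `u`
  set D := F.coeff u • f - f.coeff u • F
  suffices D = 0 from sub_eq_zero.mp this ▸ V.smul_mem _ hFV
  by_contra hD
  have hDs : D ∈ supported k k (s : Set G) :=
    sub_mem (Submodule.smul_mem _ _ hfs) (Submodule.smul_mem _ _ hFs)
  have hDU : ∀ m ∈ U, f * single m 1 * D = D * single m 1 * f := fun m hm => by
    simp only [D, mul_sub, sub_mul, mul_smul_comm, smul_mul_assoc, hFU m hm]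
  apply Finsupp.mem_support_iff.mp (hlead D hDs hD hDU)
  simp [D, mul_comm]

end Rigidity

end MonoidAlgebra

section Relations

variable {P A R : Type*} [CommRing P] [Ring A] [Algebra P A] [Ring R] (Θ : A →+* R) {C : Set R}

theorem sum_map_mul_sub_mul_mul_eq_zero (hcomm : ∀ a, ∀ c ∈ C, Commute (Θ a) c) {ι : Type*}
    {s : Finset ι} {f : ι → A} {c : ι → R} (hc : ∀ i, c i ∈ C)
    (h : ∑ i ∈ s, Θ (f i) * c i = 0) (x y : A) :
    ∑ i ∈ s, Θ (x * f i - f i * y) * c i = 0 := by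
  have hterm (i : ι) :
      Θ (x * f i - f i * y) * c i = Θ x * (Θ (f i) * c i) - Θ (f i) * c i * Θ y := by
    rw [map_sub, map_mul, map_mul, sub_mul, mul_assoc, mul_assoc, (hcomm y _ (hc i)).eq, mul_assoc]
  simp only [hterm, Finset.sum_sub_distrib, ← Finset.mul_sum, ← Finset.sum_mul, h, mul_zero,
    zero_mul, sub_zero]

theorem eq_zero_of_sum_map_mul_eq_zero [Nontrivial P] (hcomm : ∀ a, ∀ c ∈ C, Commute (Θ a) c)
    (hdom : ∀ c ∈ C, ∀ a, c * Θ a = 0 → c = 0 ∨ a = 0)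
    (hrigid : ∀ f : A, f ≠ 0 → ∀ V : Submodule P A, V.FG →
      (∀ w, ∃ F ∈ V, F ≠ 0 ∧ f * w * F = F * w * f) → ∃ d : P, d ≠ 0 ∧ d • f ∈ V)
    {n : ℕ} {f : Fin n → A} (hf : LinearIndependent P f) {c : Fin n → R}
    (hc : ∀ i, c i ∈ C) (h : ∑ i, Θ (f i) * c i = 0) : ∀ i, c i = 0 := by
  induction n with
  | zero => exact fun i => i.elim0
  | succ n ih =>
  have htail : LinearIndependent P (f ∘ Fin.succ) := hf.comp _ (Fin.succ_injective n)
  let L (w : A) : A →ₗ[P] A := LinearMap.mulLeft P (f 0 * w) - LinearMap.mulRight P (w * f 0)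
  -- `L w` kills `f 0`, so pushing the relation through `L w` leaves a relation on the tail
  by_cases hL : ∃ w,
      Disjoint (Submodule.span P (Set.range (f ∘ Fin.succ))) (LinearMap.ker (L w))
  · obtain ⟨w, hw⟩ := hL
    have hrel := sum_map_mul_sub_mul_mul_eq_zero Θ hcomm hc h (f 0 * w) (w * f 0)
    rw [Fin.sum_univ_succ, mul_assoc, sub_self, map_zero, zero_mul, zero_add] at hrel
    have hsucc : ∀ i : Fin n, c i.succ = 0 := ih (htail.map hw) (fun i => hc i.succ) hrel
    have h0 : c 0 * Θ (f 0) = 0 := by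
      simpa [Fin.sum_univ_succ, hsucc, (hcomm (f 0) _ (hc 0)).eq] using h
    exact Fin.cases ((hdom _ (hc 0) _ h0).resolve_right (hf.ne_zero 0)) hsucc
  · obtain ⟨d, hd, hdf⟩ :=
      hrigid (f 0) (hf.ne_zero 0) _ (Submodule.fg_span (Set.finite_range _)) fun w => by
        obtain ⟨F, hF, hFw, hF0⟩ : ∃ F ∈ Submodule.span P (Set.range (f ∘ Fin.succ)),
            F ∈ LinearMap.ker (L w) ∧ F ≠ 0 := by
          simpa [Submodule.disjoint_def] using not_exists.mp hL w
        refine ⟨F, hF, hF0, ?_⟩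
        simpa [L, sub_eq_zero, mul_assoc] using hFw
    rw [Set.range_comp, Fin.range_succ, Set.compl_eq_univ_sdiff] at hdf
    exact absurd (hf.eq_zero_of_smul_mem_span 0 d hdf) hd

end Relations

theorem LinIndepOver.eq_zero_of_sum_eq_zero {R : Type*} [Ring R] {C : Subring R} {S : Set R}
    (hS : LinIndepOver R C S) {ι : Type*} {s : Finset ι} {v : ι → R} (hv : Set.InjOn v s)
    (hvS : ∀ i ∈ s, v i ∈ S) {c : ι → C} (h : ∑ i ∈ s, v i * c i = 0) {i : ι} (hi : i ∈ s) :
    c i = 0 := by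
  set e := s.equivFin
  have := hS s.card (fun j => v (e.symm j)) (fun j => c (e.symm j)) (fun j => hvS _ (e.symm j).2)
    (fun j j' hjj' => e.symm.injective (Subtype.ext (hv (e.symm j).2 (e.symm j').2 hjj')))
    (by rw [← h, ← Finset.sum_coe_sort s]; exact e.symm.sum_comp fun j => v j * c j) (e ⟨i, hi⟩)
  simpa using this

theorem linIndepOver_of_subset_one {R : Type*} [Ring R] {C : Subring R} {S : Set R}
    (hS : S ⊆ {1}) : LinIndepOver R C S := by
  intro n s c hs hinj hsum i
  have hs1 (j : Fin n) : s j = 1 := hS (hs j)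
  have : Subsingleton (Fin n) := ⟨fun a b => hinj ((hs1 a).trans (hs1 b).symm)⟩
  rwa [Fintype.sum_subsingleton _ i, hs1, one_mul, ZeroMemClass.coe_eq_zero] at hsum

namespace Subring

variable {R : Type*} [Ring R]

theorem commute_of_mem_bot {x : R} (hx : x ∈ (⊥ : Subring R)) (y : R) : Commute x y := by
  obtain ⟨n, rfl⟩ := mem_bot.mp hx
  exact Int.cast_commute n y

instance instCommRingBot : CommRing (⊥ : Subring R) where
  __ := (⊥ : Subring R).toRing
  mul_comm a b := Subtype.ext (commute_of_mem_bot a.2 b).eq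

end Subring

section UnitsMonoidAlgebra

variable {R : Type*} [Ring R] (M : Submonoid Rˣ)

noncomputable def primeLift : MonoidAlgebra (⊥ : Subring R) M →+* R :=
  MonoidAlgebra.liftNCRingHom (⊥ : Subring R).subtype ((Units.coeHom R).comp M.subtype)
    fun p _ => Subring.commute_of_mem_bot p.2 _

theorem primeLift_single (m : M) (p : (⊥ : Subring R)) :
    primeLift M (MonoidAlgebra.single m p) = p * ((m : Rˣ) : R) :=
  MonoidAlgebra.liftNC_single _ _ _ _

theorem primeLift_apply (x : MonoidAlgebra (⊥ : Subring R) M) :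
    primeLift M x = ∑ m ∈ x.coeff.support, ((m : Rˣ) : R) * x.coeff m := by
  conv_lhs => rw [← MonoidAlgebra.sum_coeff_single x]
  rw [map_finsuppSum, Finsupp.sum]
  exact Finset.sum_congr rfl fun m _ =>
    (primeLift_single M m _).trans (Subring.commute_of_mem_bot (x.coeff m).2 _).eq

theorem primeLift_mem_closure (x : MonoidAlgebra (⊥ : Subring R) M) :
    primeLift M x ∈ Subring.closure (Units.val '' (M : Set Rˣ)) := by
  rw [primeLift_apply]
  exact Subring.sum_mem _ fun m _ => Subring.mul_mem _ (Subring.subset_closure ⟨m, m.2, rfl⟩)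
    (bot_le (a := Subring.closure _) (x.coeff m).2)

theorem commute_primeLift {C : Set R} (hC : ∀ c ∈ C, ∀ u : Rˣ, u ∈ M → c * u = u * c)
    (x : MonoidAlgebra (⊥ : Subring R) M) {c : R} (hc : c ∈ C) : Commute (primeLift M x) c := by
  rw [primeLift_apply]
  exact Commute.sum_left _ _ _ fun m _ =>
    Commute.mul_left (hC c hc m m.2).symm (Subring.commute_of_mem_bot (x.coeff m).2 c)

theorem primeLift_injective (h : LinIndepOver R ⊥ (Units.val '' (M : Set Rˣ))) :
    Function.Injective (primeLift M) := by
  refine (injective_iff_map_eq_zero _).mpr fun x hx =>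
    MonoidAlgebra.coeff_eq_zero.mp (Finsupp.ext fun m => ?_)
  by_contra hm
  rw [primeLift_apply] at hx
  exact hm (h.eq_zero_of_sum_eq_zero (fun a _ b _ e => Subtype.ext (Units.ext e))
    (fun m _ => ⟨m, m.2, rfl⟩) hx (Finsupp.mem_support_iff.mpr hm))

end UnitsMonoidAlgebra

theorem eq_zero_of_sum_primeLift_mul_eq_zero {R : Type*} [Ring R] [Nontrivial R]
    {M : Submonoid Rˣ} [LinearOrder M] [MulLeftStrictMono M] [MulRightStrictMono M] {C : Subring R}
    (h1 : LinIndepOver R ⊥ (Units.val '' (M : Set Rˣ)))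
    (h2 : ∀ c ∈ C, ∀ f ∈ Subring.closure (Units.val '' (M : Set Rˣ)),
      c * f = 0 → c = 0 ∨ f = 0)
    (h3 : ∀ c ∈ C, ∀ u : Rˣ, u ∈ M → c * (u : R) = (u : R) * c)
    (htwist : ∀ u v : M, (∀ᶠ m in cofinite, u * m * v = v * m * u) → u = v)
    {n : ℕ} {f : Fin n → MonoidAlgebra (⊥ : Subring R) M}
    (hf : LinearIndependent (⊥ : Subring R) f) {c : Fin n → R} (hc : ∀ i, c i ∈ C)
    (h : ∑ i, primeLift M (f i) * c i = 0) : ∀ i, c i = 0 := by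
  have : NoZeroDivisors (⊥ : Subring R) := ⟨fun {p q} hpq => by
    simpa using h2 p (bot_le (a := C) p.2) q (bot_le (a := Subring.closure _) q.2)
      (congrArg Subtype.val hpq)⟩
  have : IsDomain (⊥ : Subring R) := NoZeroDivisors.to_isDomain _
  refine eq_zero_of_sum_map_mul_eq_zero (primeLift M) (C := C) (commute_primeLift M h3)
    (fun c hc x hx => ?_) (fun f hf V hV hw => ?_) hf hc h
  · exact (h2 c hc _ (primeLift_mem_closure M x) hx).imp_right fun hx =>
      primeLift_injective M h1 (hx.trans (map_zero _).symm)
  · exact MonoidAlgebra.exists_smul_mem_of_forall_exists_mul_mul_eq htwist hf hV hw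

/-- Let `R` be a ring with prime subring `P = ⊥` (the subring generated
by `1`), `M` a submonoid of the group of units of `R` and `C` a subring of `R`. Assume:
(1) distinct elements of `M` are linearly independent over `P`;
(2) for `c ∈ C` and `f` in the subring generated by `P` and `M`, `c * f = 0` implies
    `c = 0` or `f = 0`;
(3) every element of `M` commutes with every element of `C`;
(4) `M` is an orderable monoid;
(5) there are a group `H` and an injective monoid homomorphism `M → H` such that the
    subgroup of `H` generated by the image of `M` has trivial center.
Then distinct elements of `M` are linearly independent over `C`. -/
theorem linIndepOver_of_linIndepOver_prime (R : Type*) [Ring R]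
    (M : Submonoid Rˣ) (C : Subring R)
    (h1 : LinIndepOver R (⊥ : Subring R) (Units.val '' (M : Set Rˣ)))
    (h2 : ∀ c ∈ C, ∀ f ∈ Subring.closure (Units.val '' (M : Set Rˣ)),
      c * f = 0 → c = 0 ∨ f = 0)
    (h3 : ∀ c ∈ C, ∀ u : Rˣ, u ∈ M → c * (u : R) = (u : R) * c)
    (h4 : ∃ lt : ↥M → ↥M → Prop, IsStrictTotalOrder ↥M lt ∧
      ∀ x y z : ↥M, lt x y → lt (z * x) (z * y) ∧ lt (x * z) (y * z))
    (H : Type*) [Group H] (φ : ↥M →* H) (hφ : Function.Injective φ)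
    (h5 : Subgroup.center ↥(Subgroup.closure (Set.range φ)) = ⊥) :
    LinIndepOver R C (Units.val '' (M : Set Rˣ)) := by
  rcases subsingleton_or_nontrivial R with hR | hR
  · exact fun _ _ _ _ _ _ _ => Subsingleton.elim _ _
  rcases subsingleton_or_nontrivial M with hM | hM
  · refine linIndepOver_of_subset_one ?_
    rintro _ ⟨u, hu, rfl⟩
    exact congrArg (fun x : M => ((x : Rˣ) : R)) (Subsingleton.elim ⟨u, hu⟩ 1)
  obtain ⟨lt, hlt, hmono⟩ := h4
  classical
  let : LinearOrder M := linearOrderOfSTO lt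
  have : MulLeftStrictMono M := ⟨fun z _ _ h => (hmono _ _ z h).1⟩
  have : MulRightStrictMono M := ⟨fun z _ _ h => (hmono _ _ z h).2⟩
  have := infinite_of_mulLeftStrictMono M
  intro n s c hs hinj hsum
  choose m hmM hm using hs
  have hmi : Function.Injective fun i => (⟨m i, hmM i⟩ : M) := fun i j e => hinj <| by
    rw [← hm i, ← hm j]; exact congrArg (fun x : M => ((x : Rˣ) : R)) e
  have := eq_zero_of_sum_primeLift_mul_eq_zero h1 h2 h3
    (fun u v => eq_of_eventually_mul_mul_eq hφ h5)
    ((MonoidAlgebra.basis M (⊥ : Subring R)).linearIndependent.comp _ hmi) (fun i => (c i).2)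
    (by simpa [primeLift_single, hm] using hsum)
  exact fun i => Subtype.ext (this i)
end

section
/- A group G contains a free monoid on two generators if and only if there exist a nonempty subset A ⊆ G and elements a, b ∈ G such that aA ∪ bA ⊆ A and aA ∩ bA = ∅. Moreover, in this case the elements a and b themselves generate a free monoid of rank 2. -/
/-!
Ping-pong: if the generators map a nonempty set `A` into itself with pairwise disjoint images,
then a nonempty word acting on a point of `A` lands in the image of its first letter. Two words
with different first letters therefore differ, a common first letter can be cancelled in the
group, and a nonempty word cannot be `1` because it would move the image of another generator
into the image of its own first letter. Conversely, if `lift g` is injective, its range is a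
ping-pong set: `g i * lift u = g j * lift v` forces `of i * u = of j * v`, hence `i = j`.
-/

open Pointwise

/-- Elements `a, b` of a monoid `G` generate a free monoid of rank 2 if the monoid
homomorphism from the free monoid on two generators to `G` sending the generators to
`a` and `b` is injective. -/
def GeneratesFreeMonoid2 {G : Type*} [Monoid G] (a b : G) : Prop :=
  Function.Injective
    (FreeMonoid.lift (fun i : Fin 2 => if i = 0 then a else b) : FreeMonoid (Fin 2) →* G)

namespace FreeMonoid

section PingPong

variable {G α ι : Type*} [Group G] [MulAction G α] {g : ι → G} {A : Set α}

theorem lift_smul_subset (hmaps : ∀ i, g i • A ⊆ A) (w : FreeMonoid ι) :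
    lift g w • A ⊆ A := by
  induction w using FreeMonoid.inductionOn' with
  | one => simp
  | of_mul i w ih =>
    rw [map_mul, lift_eval_of, mul_smul]
    exact (Set.smul_set_mono ih).trans (hmaps i)

theorem lift_of_mul_smul_mem (hmaps : ∀ i, g i • A ⊆ A) (i : ι) (w : FreeMonoid ι) {x : α}
    (hx : x ∈ A) : lift g (of i * w) • x ∈ g i • A := by
  rw [map_mul, lift_eval_of, mul_smul]
  exact Set.smul_mem_smul_set (lift_smul_subset hmaps w (Set.smul_mem_smul_set hx))

variable [Nontrivial ι]

theorem lift_of_mul_ne_one (hA : A.Nonempty) (hmaps : ∀ i, g i • A ⊆ A)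
    (hdisj : Pairwise fun i j => Disjoint (g i • A) (g j • A)) (i : ι) (w : FreeMonoid ι) :
    lift g (of i * w) ≠ 1 := by
  intro h
  obtain ⟨j, hji⟩ := exists_ne i
  obtain ⟨x, hx⟩ := hA
  have hj : g j • x ∈ g j • A := Set.smul_mem_smul_set hx
  have hi : g j • x ∈ g i • A := by
    simpa [h] using lift_of_mul_smul_mem hmaps i w (hmaps j hj)
  exact Set.disjoint_left.mp (hdisj hji) hj hi

theorem lift_injective_of_ping_pong (hA : A.Nonempty) (hmaps : ∀ i, g i • A ⊆ A)
    (hdisj : Pairwise fun i j => Disjoint (g i • A) (g j • A)) :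
    Function.Injective (lift g) := by
  intro u v huv
  induction u using FreeMonoid.inductionOn' generalizing v with
  | one =>
    cases v using FreeMonoid.casesOn with
    | one => rfl
    | of_mul j v => exact absurd huv.symm (lift_of_mul_ne_one hA hmaps hdisj j v)
  | of_mul i u ih =>
    cases v using FreeMonoid.casesOn with
    | one => exact absurd huv (lift_of_mul_ne_one hA hmaps hdisj i u)
    | of_mul j v =>
      obtain rfl | hij := eq_or_ne i j
      · rw [map_mul, map_mul, mul_right_inj] at huv
        rw [ih huv]
      · obtain ⟨x, hx⟩ := hA
        have hi := lift_of_mul_smul_mem hmaps i u hx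
        rw [huv] at hi
        exact absurd (lift_of_mul_smul_mem hmaps j v hx) (Set.disjoint_left.mp (hdisj hij) hi)

end PingPong

section Converse

variable {M ι : Type*} [Monoid M] (g : ι → M)

theorem smul_range_lift_subset (i : ι) : g i • Set.range (lift g) ⊆ Set.range (lift g) := by
  rintro _ ⟨_, ⟨w, rfl⟩, rfl⟩
  exact ⟨of i * w, by rw [map_mul, lift_eval_of]; rfl⟩

variable {g}

theorem pairwise_disjoint_smul_range_lift (hg : Function.Injective (lift g)) :
    Pairwise fun i j => Disjoint (g i • Set.range (lift g)) (g j • Set.range (lift g)) := by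
  intro i j hij
  refine Set.disjoint_left.mpr ?_
  rintro _ ⟨_, ⟨u, rfl⟩, rfl⟩ ⟨_, ⟨v, rfl⟩, huv⟩
  have : of j * v = of i * u := hg (by rw [map_mul, map_mul, lift_eval_of, lift_eval_of]; exact huv)
  have := congrArg toList this
  rw [toList_of_mul, toList_of_mul, List.cons.injEq] at this
  exact hij this.1.symm

end Converse

end FreeMonoid

section Pair

variable {G α : Type*} {a b : G}

theorem forall_fin_two_ite_smul_subset_iff [SMul G α] {A : Set α} :
    (∀ i : Fin 2, (if i = 0 then a else b) • A ⊆ A) ↔ a • A ∪ b • A ⊆ A := by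
  simp [Fin.forall_fin_two, Set.union_subset_iff]

theorem pairwise_disjoint_fin_two_ite_smul_iff [SMul G α] {A : Set α} :
    (Pairwise fun i j : Fin 2 =>
      Disjoint ((if i = 0 then a else b) • A) ((if j = 0 then a else b) • A)) ↔
      a • A ∩ b • A = ∅ := by
  refine ⟨fun h => Set.disjoint_iff_inter_eq_empty.mp (h Fin.zero_ne_one), fun h i j hij => ?_⟩
  fin_cases i <;> fin_cases j <;>
    simp_all [Set.disjoint_iff_inter_eq_empty, Set.inter_comm]

theorem GeneratesFreeMonoid2.of_ping_pong [Group G] [MulAction G α] {A : Set α}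
    (hA : A.Nonempty) (hmaps : a • A ∪ b • A ⊆ A) (hdisj : a • A ∩ b • A = ∅) :
    GeneratesFreeMonoid2 a b :=
  FreeMonoid.lift_injective_of_ping_pong hA (forall_fin_two_ite_smul_subset_iff.mpr hmaps)
    (pairwise_disjoint_fin_two_ite_smul_iff.mpr hdisj)

theorem GeneratesFreeMonoid2.exists_ping_pong [Monoid G] (h : GeneratesFreeMonoid2 a b) :
    ∃ A : Set G, A.Nonempty ∧ a • A ∪ b • A ⊆ A ∧ a • A ∩ b • A = ∅ :=
  ⟨_, Set.range_nonempty _,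
    forall_fin_two_ite_smul_subset_iff.mp (FreeMonoid.smul_range_lift_subset _),
    pairwise_disjoint_fin_two_ite_smul_iff.mp (FreeMonoid.pairwise_disjoint_smul_range_lift h)⟩

end Pair

/-- A group `G` contains a free monoid on two generators if and only if
there exist a nonempty subset `A ⊆ G` and elements `a, b ∈ G` such that
`aA ∪ bA ⊆ A` and `aA ∩ bA = ∅`. Moreover, in this case `a` and `b` themselves generate
a free monoid of rank 2. -/
theorem free_monoid_iff_pingpong (G : Type*) [Group G] :
    ((∃ a b : G, GeneratesFreeMonoid2 a b) ↔
      ∃ (A : Set G) (a b : G), A.Nonempty ∧ a • A ∪ b • A ⊆ A ∧ a • A ∩ b • A = ∅) ∧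
    (∀ (A : Set G) (a b : G), A.Nonempty → a • A ∪ b • A ⊆ A → a • A ∩ b • A = ∅ →
      GeneratesFreeMonoid2 a b) := by
  refine ⟨⟨?_, ?_⟩, fun _ _ _ => GeneratesFreeMonoid2.of_ping_pong⟩
  · rintro ⟨a, b, h⟩
    obtain ⟨A, hA, hmaps, hdisj⟩ := GeneratesFreeMonoid2.exists_ping_pong h
    exact ⟨A, a, b, hA, hmaps, hdisj⟩
  · rintro ⟨A, a, b, hA, hmaps, hdisj⟩
    exact ⟨a, b, GeneratesFreeMonoid2.of_ping_pong hA hmaps hdisj⟩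
end

section
/- Let G be a group, let H be a subgroup of G, and let x ∈ G be such that xHx⁻¹ = H. Suppose there exist an injective group homomorphism f from H to the additive group of the real numbers (ℝ, +) and a real number r with r ≥ 2 or 0 < r ≤ 1/2, such that f(xhx⁻¹) = r·f(h) for all h ∈ H. Then for every t ∈ H with t ≠ 1, the elements tx and x generate a free monoid of rank 2 in G. (In particular, if H is a nontrivial additive subgroup of ℝ, C = ⟨x⟩ is infinite cyclic, and G = H ⋊ C is the semidirect product in which x acts on H by multiplication by such an r, then for every t ∈ H∖{0} the elements tx and x generate a noncommutative free submonoid of G.) -/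
/-!
A word `c₀ c₁ ⋯ cₙ₋₁` in `a = t x` and `b = x` evaluates to `h * x ^ n` with `h ∈ H`: moving
every `x` to the right conjugates what it passes, so `f h = f t * ∑_{cᵢ = a} rⁱ`. The exponent `n`
is determined by the product, since `x ^ k ∈ H` would make conjugation by `x ^ k` both trivial
under `f` and a scaling by `r ^ k ≠ 1`. For words of equal length it remains to read the word
off the sum `∑_{cᵢ = a} rⁱ`, a base-`r` expansion with digits `0, 1`: for `r ≥ 2` distinct
expansions are at least `1` apart, for `r ≤ 1/2` the leading digit dominates.
-/

def digitValue (r : ℝ) : List (Fin 2) → ℝ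
  | [] => 0
  | c :: w => (if c = 0 then 1 else 0) + r * digitValue r w

section DigitValue

variable {r : ℝ}

lemma digitValue_nonneg (hr : 0 ≤ r) : ∀ w, 0 ≤ digitValue r w
  | [] => le_rfl
  | c :: w => by
    have := mul_nonneg hr (digitValue_nonneg hr w)
    simp only [digitValue]
    split_ifs <;> linarith

lemma digitValue_lt_two (hr₀ : 0 ≤ r) (hr : r ≤ 1 / 2) : ∀ w, digitValue r w < 2
  | [] => two_pos
  | c :: w => by
    have := mul_le_mul_of_nonneg_right hr (digitValue_nonneg hr₀ w)
    have := digitValue_lt_two hr₀ hr w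
    simp only [digitValue]
    split_ifs <;> linarith

lemma eq_of_digitValue_eq_of_le_half (hr₀ : 0 < r) (hr : r ≤ 1 / 2) :
    ∀ w₁ w₂ : List (Fin 2), w₁.length = w₂.length →
      digitValue r w₁ = digitValue r w₂ → w₁ = w₂
  | [], [], _, _ => rfl
  | c₁ :: w₁, c₂ :: w₂, hl, hv => by
    have h₁ := mul_nonneg hr₀.le (digitValue_nonneg hr₀.le w₁)
    have h₂ := mul_nonneg hr₀.le (digitValue_nonneg hr₀.le w₂)
    -- `r * digitValue r w < 1`, so the leading digit is the integer part
    have h₁' := mul_le_mul_of_nonneg_right hr (digitValue_nonneg hr₀.le w₁)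
    have h₂' := mul_le_mul_of_nonneg_right hr (digitValue_nonneg hr₀.le w₂)
    have := digitValue_lt_two hr₀.le hr w₁
    have := digitValue_lt_two hr₀.le hr w₂
    simp only [digitValue] at hv
    have hc : c₁ = c₂ := by
      fin_cases c₁ <;> fin_cases c₂ <;> simp at hv ⊢ <;> linarith
    subst hc
    have hw : digitValue r w₁ = digitValue r w₂ :=
      mul_left_cancel₀ hr₀.ne' (add_left_cancel hv)
    rw [eq_of_digitValue_eq_of_le_half hr₀ hr w₁ w₂ (by simpa using hl) hw]

lemma one_le_abs_digitValue_sub (hr : 2 ≤ r) :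
    ∀ w₁ w₂ : List (Fin 2), w₁.length = w₂.length → w₁ ≠ w₂ →
      1 ≤ |digitValue r w₁ - digitValue r w₂|
  | [], [], _, hne => absurd rfl hne
  | c₁ :: w₁, c₂ :: w₂, hl, hne => by
    have hl' : w₁.length = w₂.length := by simpa using hl
    have hsplit : digitValue r (c₁ :: w₁) - digitValue r (c₂ :: w₂) =
        ((if c₁ = 0 then 1 else 0) - (if c₂ = 0 then 1 else 0)) +
          r * (digitValue r w₁ - digitValue r w₂) := by
      simp only [digitValue]; ring
    rw [hsplit]
    by_cases hw : w₁ = w₂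
    · have hc : c₁ ≠ c₂ := fun hc => hne (hc ▸ hw ▸ rfl)
      subst hw
      fin_cases c₁ <;> fin_cases c₂ <;> simp_all
    · have ih := one_le_abs_digitValue_sub hr w₁ w₂ hl' hw
      have : 2 ≤ |r * (digitValue r w₁ - digitValue r w₂)| := by
        rw [abs_mul, abs_of_nonneg (by linarith : (0 : ℝ) ≤ r)]
        nlinarith
      have hdigit : |((if c₁ = 0 then 1 else 0) - (if c₂ = 0 then 1 else 0) : ℝ)| ≤ 1 := by
        fin_cases c₁ <;> fin_cases c₂ <;> simp
      have := abs_add' (r * (digitValue r w₁ - digitValue r w₂))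
        ((if c₁ = 0 then 1 else 0) - (if c₂ = 0 then 1 else 0))
      linarith

lemma eq_of_digitValue_eq (hr : 2 ≤ r ∨ (0 < r ∧ r ≤ 1 / 2)) {w₁ w₂ : List (Fin 2)}
    (hl : w₁.length = w₂.length) (hv : digitValue r w₁ = digitValue r w₂) : w₁ = w₂ := by
  rcases hr with hr | ⟨hr₀, hr⟩
  · by_contra hne
    have := one_le_abs_digitValue_sub hr w₁ w₂ hl hne
    rw [hv, sub_self, abs_zero] at this
    linarith
  · exact eq_of_digitValue_eq_of_le_half hr₀ hr w₁ w₂ hl hv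

end DigitValue

section AdditiveValued

variable {M A : Type*} {f : M → A}

lemma map_one_eq_zero [MulOneClass M] [AddGroup A]
    (hf_add : ∀ a b : M, f (a * b) = f a + f b) : f 1 = 0 := by
  simpa using hf_add 1 1

lemma map_mul_mul_inv [Group M] [AddCommGroup A]
    (hf_add : ∀ a b : M, f (a * b) = f a + f b) (u h : M) : f (u * h * u⁻¹) = f h := by
  have hu := hf_add u u⁻¹
  rw [mul_inv_cancel, map_one_eq_zero hf_add] at hu
  rw [hf_add, hf_add, add_right_comm, ← hu, zero_add]

end AdditiveValued

section Conjugation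

variable {G : Type*} [Group G] {H : Subgroup G} {x : G}

def conjSubgroup (hxH : ∀ g : G, g ∈ H ↔ x * g * x⁻¹ ∈ H) (h : H) : H :=
  ⟨x * h * x⁻¹, (hxH h).mp h.2⟩

variable (hxH : ∀ g : G, g ∈ H ↔ x * g * x⁻¹ ∈ H)

lemma coe_conjSubgroup_iterate (n : ℕ) (h : H) :
    ((conjSubgroup hxH)^[n] h : G) = x ^ n * h * (x ^ n)⁻¹ := by
  induction n with
  | zero => simp
  | succ n ih =>
    rw [Function.iterate_succ_apply', conjSubgroup, Subgroup.coe_mk, ih]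
    group

lemma map_conjSubgroup_iterate {f : H → ℝ} {r : ℝ}
    (hf_conj : ∀ h : H, f (conjSubgroup hxH h) = r * f h) (n : ℕ) (h : H) :
    f ((conjSubgroup hxH)^[n] h) = r ^ n * f h := by
  induction n with
  | zero => simp
  | succ n ih =>
    rw [Function.iterate_succ_apply', hf_conj, ih]
    ring

def wordCoeff (t : H) : List (Fin 2) → H
  | [] => 1
  | c :: w => (if c = 0 then t else 1) * conjSubgroup hxH (wordCoeff t w)

lemma prod_map_eq_wordCoeff_mul_pow (t : H) (w : List (Fin 2)) :
    (w.map fun i => if i = 0 then (t : G) * x else x).prod =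
      wordCoeff hxH t w * x ^ w.length := by
  induction w with
  | nil => simp [wordCoeff]
  | cons c w ih =>
    rw [List.map_cons, List.prod_cons, ih, wordCoeff, List.length_cons]
    split_ifs <;> simp only [conjSubgroup, Subgroup.coe_mul, Subgroup.coe_one] <;> group

lemma map_wordCoeff {f : H → ℝ} {r : ℝ} (hf_add : ∀ h₁ h₂ : H, f (h₁ * h₂) = f h₁ + f h₂)
    (hf_conj : ∀ h : H, f (conjSubgroup hxH h) = r * f h) (t : H) (w : List (Fin 2)) :
    f (wordCoeff hxH t w) = f t * digitValue r w := by
  have hf_one := map_one_eq_zero hf_add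
  induction w with
  | nil => simp [wordCoeff, digitValue, hf_one]
  | cons c w ih =>
    rw [wordCoeff, hf_add, hf_conj, ih, digitValue]
    split_ifs
    · ring
    · rw [hf_one]; ring

lemma eq_zero_of_pow_mem {f : H → ℝ} {r : ℝ}
    (hf_add : ∀ h₁ h₂ : H, f (h₁ * h₂) = f h₁ + f h₂)
    (hf_conj : ∀ h : H, f (conjSubgroup hxH h) = r * f h) (hr₀ : 0 ≤ r) (hr₁ : r ≠ 1)
    {t : H} (ht : f t ≠ 0) {k : ℕ} (hk : x ^ k ∈ H) : k = 0 := by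
  have hconj : (conjSubgroup hxH)^[k] t = ⟨x ^ k, hk⟩ * t * ⟨x ^ k, hk⟩⁻¹ :=
    Subtype.ext (coe_conjSubgroup_iterate hxH k t)
  have hrk : r ^ k * f t = 1 * f t := by
    rw [← map_conjSubgroup_iterate hxH hf_conj, hconj, map_mul_mul_inv hf_add, one_mul]
  by_contra hk₀
  exact hr₁ ((pow_eq_one_iff_of_nonneg hr₀ hk₀).mp (mul_right_cancel₀ ht hrk))

lemma eq_of_mul_pow_eq {f : H → ℝ} {r : ℝ}
    (hf_add : ∀ h₁ h₂ : H, f (h₁ * h₂) = f h₁ + f h₂)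
    (hf_conj : ∀ h : H, f (conjSubgroup hxH h) = r * f h) (hr₀ : 0 ≤ r) (hr₁ : r ≠ 1)
    {t : H} (ht : f t ≠ 0) {h₁ h₂ : H} {i j : ℕ} (heq : (h₁ : G) * x ^ i = h₂ * x ^ j) :
    i = j := by
  wlog hij : i ≤ j generalizing h₁ h₂ i j
  · exact (this heq.symm (le_of_not_ge hij)).symm
  have hmem : x ^ (j - i) ∈ H := by
    have : x ^ (j - i) = ((h₂⁻¹ * h₁ : H) : G) := by
      rw [Subgroup.coe_mul, Subgroup.coe_inv, eq_inv_mul_iff_mul_eq]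
      apply mul_right_cancel (b := x ^ i)
      rw [mul_assoc, ← pow_add, Nat.sub_add_cancel hij, heq]
    exact this ▸ (h₂⁻¹ * h₁).2
  have := eq_zero_of_pow_mem hxH hf_add hf_conj hr₀ hr₁ ht hmem
  omega

end Conjugation

/-- Let `G` be a group, `H ≤ G` a subgroup and `x ∈ G` with `xHx⁻¹ = H`.
Suppose there is an injective group homomorphism `f : H → (ℝ, +)` and a real number `r`
with `r ≥ 2` or `0 < r ≤ 1/2` such that `f(xhx⁻¹) = r·f(h)` for all `h ∈ H`. Then for every
`t ∈ H` with `t ≠ 1`, the elements `t·x` and `x` generate a free monoid of rank 2 in `G`. -/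
theorem free_monoid_from_scaling_action (G : Type*) [Group G] (H : Subgroup G) (x : G)
    (hxH : ∀ g : G, g ∈ H ↔ x * g * x⁻¹ ∈ H)
    (f : ↥H → ℝ)
    (hf_add : ∀ h₁ h₂ : ↥H, f (h₁ * h₂) = f h₁ + f h₂)
    (hf_inj : Function.Injective f)
    (r : ℝ) (hr : 2 ≤ r ∨ (0 < r ∧ r ≤ 1 / 2))
    (hf_conj : ∀ h : ↥H, f ⟨x * (h : G) * x⁻¹, (hxH (h : G)).mp h.2⟩ = r * f h) :
    ∀ t : ↥H, (t : G) ≠ 1 → GeneratesFreeMonoid2 ((t : G) * x) x := by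
  intro t ht w₁ w₂ heq
  have hft : f t ≠ 0 := fun h₀ =>
    ht (congrArg Subtype.val (hf_inj (h₀.trans (map_one_eq_zero hf_add).symm)))
  have hr₀ : 0 < r := by rcases hr with hr | ⟨hr, -⟩ <;> linarith
  have hr₁ : r ≠ 1 := by rcases hr with hr | ⟨-, hr⟩ <;> intro h <;> linarith
  simp only [FreeMonoid.lift_apply, prod_map_eq_wordCoeff_mul_pow hxH] at heq
  have hlen := eq_of_mul_pow_eq hxH hf_add hf_conj hr₀.le hr₁ hft heq
  rw [hlen] at heq
  have hcoeff := Subtype.ext (mul_right_cancel heq)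
  have hvalue : digitValue r w₁.toList = digitValue r w₂.toList := by
    apply mul_left_cancel₀ hft
    rw [← map_wordCoeff hxH hf_add hf_conj, ← map_wordCoeff hxH hf_add hf_conj, hcoeff]
  exact FreeMonoid.toList.injective (eq_of_digitValue_eq hr hlen hvalue)
end

section
/- Let (G,<) be an ordered group possessing a convex subgroup C which is not normal in G. Then G contains a noncommutative free monoid; more precisely, there exist elements a, b ∈ G with 1 < a and 1 < b such that a and b generate a free monoid of rank 2 in G. -/
/-- A subgroup `C` of an ordered group is convex if whenever `x, z ∈ C`, `y ∈ G` and
`x ≤ y ≤ z`, then `y ∈ C`. -/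
def Subgroup.IsConvex {G : Type*} [Group G] [Preorder G] (C : Subgroup G) : Prop :=
  ∀ x ∈ C, ∀ z ∈ C, ∀ y : G, x ≤ y → y ≤ z → y ∈ C

/-!
Convex subgroups of an ordered group form a chain, so if `t⁻¹ c t ∉ C` for some `c ∈ C`, then
`C ⊆ t⁻¹ C t`, i.e. conjugation by `t` maps `C` into itself but misses `c`. Every positive word
of length `n` in `t` and `c t` then lies in the coset `C tⁿ`; as no positive power of `t` lies in
`C`, equal words have equal lengths, and equal-length words with different first letters would
put `c` into `t C t⁻¹`. Finally `t ∉ C` lies above or below all of `C`, so either `t, c t` or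
their inverses are positive.
-/

theorem FreeMonoid.lift_inv_apply {α G : Type*} [Group G] (f : α → G) (w : FreeMonoid α) :
    lift (fun i => (f i)⁻¹) w = (lift f w.reverse)⁻¹ := by
  induction w using FreeMonoid.inductionOn' with
  | one => show (1 : G) = (lift f 1)⁻¹; simp
  | of_mul x w ih => rw [map_mul, reverse_mul, map_mul, mul_inv_rev, ih, reverse_of]; rfl

theorem GeneratesFreeMonoid2.inv {G : Type*} [Group G] {a b : G}
    (h : GeneratesFreeMonoid2 a b) : GeneratesFreeMonoid2 a⁻¹ b⁻¹ := by
  have hf : (fun i : Fin 2 => if i = 0 then a⁻¹ else b⁻¹) =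
      fun i => (if i = 0 then a else b)⁻¹ := funext fun i => (apply_ite _ _ _ _).symm
  intro w₁ w₂ hw
  simp only [hf, FreeMonoid.lift_inv_apply, inv_inj] at hw
  simpa only [FreeMonoid.reverse_reverse] using congrArg FreeMonoid.reverse (h hw)

section ConjMem

variable {G α : Type*} [Group G] {K : Subgroup G} {t : G}

theorem conj_pow_mem_of_conj_mem (hK : ∀ k ∈ K, t * k * t⁻¹ ∈ K) (n : ℕ) {k : G}
    (hk : k ∈ K) : t ^ n * k * (t ^ n)⁻¹ ∈ K := by
  induction n with
  | zero => simpa using hk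
  | succ n ih =>
    convert hK _ ih using 1
    rw [pow_succ']
    group

theorem eq_zero_of_pow_mem_s6 (hK : ∀ k ∈ K, t * k * t⁻¹ ∈ K) {u : G} (hu : u ∈ K)
    (hu' : t⁻¹ * u * t ∉ K) {n : ℕ} (hn : t ^ n ∈ K) : n = 0 := by
  obtain _ | m := n
  · rfl
  have h := conj_pow_mem_of_conj_mem hK m (K.mul_mem (K.mul_mem (K.inv_mem hn) hu) hn)
  refine absurd ?_ hu'
  convert h using 1
  rw [pow_succ]
  group

theorem exists_mem_lift_eq_mul_pow_length (hK : ∀ k ∈ K, t * k * t⁻¹ ∈ K) {f : α → G}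
    (hf : ∀ i, f i * t⁻¹ ∈ K) (w : FreeMonoid α) :
    ∃ k ∈ K, FreeMonoid.lift f w = k * t ^ w.length := by
  induction w using FreeMonoid.inductionOn' with
  | one => exact ⟨1, K.one_mem, by simp⟩
  | of_mul i w ih =>
    obtain ⟨k, hk, hw⟩ := ih
    refine ⟨f i * t⁻¹ * (t * k * t⁻¹), K.mul_mem (hf i) (hK k hk), ?_⟩
    rw [map_mul, FreeMonoid.lift_eval_of, hw, FreeMonoid.length_mul, FreeMonoid.length_of,
      add_comm, pow_succ']
    group

theorem length_eq_of_lift_eq (hK : ∀ k ∈ K, t * k * t⁻¹ ∈ K) {f : α → G}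
    (hf : ∀ i, f i * t⁻¹ ∈ K) (ht : ∀ n : ℕ, t ^ n ∈ K → n = 0) {w₁ w₂ : FreeMonoid α}
    (h : FreeMonoid.lift f w₁ = FreeMonoid.lift f w₂) : w₁.length = w₂.length := by
  wlog hle : w₁.length ≤ w₂.length generalizing w₁ w₂
  · exact (this h.symm (le_of_not_ge hle)).symm
  obtain ⟨k₁, hk₁, h₁⟩ := exists_mem_lift_eq_mul_pow_length hK hf w₁
  obtain ⟨k₂, hk₂, h₂⟩ := exists_mem_lift_eq_mul_pow_length hK hf w₂
  obtain ⟨d, hd⟩ := Nat.exists_eq_add_of_le' hle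
  rw [h₁, h₂, hd, pow_add, ← mul_assoc] at h
  have hd0 : d = 0 := ht d (by
    rw [← inv_mul_cancel_left k₂ (t ^ d), ← mul_right_cancel h]
    exact K.mul_mem (K.inv_mem hk₂) hk₁)
  omega

theorem FreeMonoid.lift_injective_of_conj_mem (hK : ∀ k ∈ K, t * k * t⁻¹ ∈ K) {f : α → G}
    (hf : ∀ i, f i * t⁻¹ ∈ K) (ht : ∀ n : ℕ, t ^ n ∈ K → n = 0)
    (hcos : Function.Injective fun i => (f i : G ⧸ K)) :
    Function.Injective (FreeMonoid.lift f) := by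
  intro w₁ w₂ h
  induction w₁ using FreeMonoid.inductionOn' generalizing w₂ with
  | one => exact (FreeMonoid.length_eq_zero.1 (length_eq_of_lift_eq hK hf ht h).symm).symm
  | of_mul i w₁ ih =>
    have hlen := length_eq_of_lift_eq hK hf ht h
    cases w₂ with
    | one => simp [FreeMonoid.length_mul] at hlen
    | of_mul j w₂ =>
      simp only [FreeMonoid.length_mul, FreeMonoid.length_of, Nat.add_left_cancel_iff]
        at hlen
      rw [map_mul, map_mul, FreeMonoid.lift_eval_of, FreeMonoid.lift_eval_of] at h
      obtain ⟨k₁, hk₁, h₁⟩ := exists_mem_lift_eq_mul_pow_length hK hf w₁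
      obtain ⟨k₂, hk₂, h₂⟩ := exists_mem_lift_eq_mul_pow_length hK hf w₂
      have hij : i = j := by
        have h' : f i * k₁ = f j * k₂ := by
          rw [h₁, h₂, hlen, ← mul_assoc, ← mul_assoc] at h
          exact mul_right_cancel h
        refine hcos (QuotientGroup.eq.2 ?_)
        rw [eq_mul_inv_of_mul_eq h'.symm, mul_assoc, inv_mul_cancel_left]
        exact K.mul_mem hk₁ (K.inv_mem hk₂)
      subst hij
      rw [ih (mul_left_cancel h)]

theorem generatesFreeMonoid2_mul_of_conj_mem (hK : ∀ k ∈ K, t * k * t⁻¹ ∈ K) {u : G}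
    (hu : u ∈ K) (hu' : t⁻¹ * u * t ∉ K) : GeneratesFreeMonoid2 t (u * t) := by
  refine FreeMonoid.lift_injective_of_conj_mem hK (fun i => ?_)
    (fun _ => eq_zero_of_pow_mem_s6 hK hu hu') ?_
  · split_ifs <;> simp [hu]
  · intro i j hij
    fin_cases i <;> fin_cases j
    · rfl
    · exact absurd (by simpa [mul_assoc] using QuotientGroup.eq.1 hij) hu'
    · exact absurd (by simpa [mul_assoc] using QuotientGroup.eq.1 hij.symm) hu'
    · rfl

end ConjMem

theorem Subgroup.IsConvex.comap {G H : Type*} [Group G] [Preorder G] [Group H] [Preorder H]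
    {C : Subgroup H} (hC : C.IsConvex) {f : G →* H} (hf : Monotone f) : (C.comap f).IsConvex :=
  fun _ hx _ hz _ hxy hyz => hC _ hx _ hz _ (hf hxy) (hf hyz)

theorem Subgroup.IsConvex.lt_of_mem_of_notMem {G : Type*} [Group G] [LinearOrder G]
    {K : Subgroup G} (hK : K.IsConvex) {k y : G} (hk : k ∈ K) (hy : y ∉ K) (h1 : 1 < y) :
    k < y := by
  by_contra! h
  exact hy (hK 1 K.one_mem k hk y h1.le h)

section OrderedGroup

variable {G : Type*} [Group G] [LinearOrder G] [CovariantClass G G (· * ·) (· < ·)]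
  [CovariantClass G G (Function.swap (· * ·)) (· < ·)]

theorem MulAut.conj_strictMono (g : G) : StrictMono (MulAut.conj g) :=
  fun _ _ h => by simpa using mul_lt_mul_left (mul_lt_mul_right h g) g⁻¹

theorem Subgroup.IsConvex.le_of_mem_of_notMem {K K' : Subgroup G} (hK : K.IsConvex)
    (hK' : K'.IsConvex) {y : G} (hyK' : y ∈ K') (hyK : y ∉ K) : K ≤ K' := by
  wlog h1 : 1 < y generalizing y
  · have hy1 : y < 1 := (not_lt.1 h1).lt_of_ne fun h => hyK (h ▸ K.one_mem)
    exact this (K'.inv_mem hyK') (by simpa using hyK) (Right.one_lt_inv_iff.2 hy1)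
  intro x hx
  exact hK' y⁻¹ (K'.inv_mem hyK') y hyK' x
    (inv_lt'.1 (hK.lt_of_mem_of_notMem (K.inv_mem hx) hyK h1)).le
    (hK.lt_of_mem_of_notMem hx hyK h1).le

end OrderedGroup

/-- Let `(G,<)` be an ordered group possessing a convex subgroup `C` which
is not normal in `G`. Then `G` contains a noncommutative free monoid: there exist `a, b ∈ G`
with `1 < a` and `1 < b` generating a free monoid of rank 2. -/
theorem free_monoid_of_nonnormal_convex_subgroup (G : Type*) [Group G] [LinearOrder G]
    [CovariantClass G G (· * ·) (· < ·)]
    [CovariantClass G G (Function.swap (· * ·)) (· < ·)]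
    (C : Subgroup G) (hC : C.IsConvex) (hCnn : ¬ C.Normal) :
    ∃ a b : G, 1 < a ∧ 1 < b ∧ GeneratesFreeMonoid2 a b := by
  obtain ⟨c, hc, t, hct⟩ : ∃ c ∈ C, ∃ t : G, t⁻¹ * c * t ∉ C := by
    by_contra! h
    exact hCnn ⟨fun c hc g => by simpa using h c hc g⁻¹⟩
  have hconj : ∀ k ∈ C, t * k * t⁻¹ ∈ C := by
    have hle := hC.le_of_mem_of_notMem (hC.comap (f := (MulAut.conj t).toMonoidHom)
      (MulAut.conj_strictMono t).monotone) (y := t⁻¹ * c * t) (by simpa [mul_assoc] using hc) hct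
    exact fun k hk => by simpa using hle hk
  have hfree : GeneratesFreeMonoid2 t (c * t) := generatesFreeMonoid2_mul_of_conj_mem hconj hc hct
  have ht : t ∉ C := fun h => one_ne_zero (eq_zero_of_pow_mem_s6 hconj hc hct (n := 1) (by simpa))
  rcases (ne_of_mem_of_not_mem C.one_mem ht).lt_or_gt with h | h
  · exact ⟨t, c * t, h,
      inv_lt_iff_one_lt_mul'.1 (hC.lt_of_mem_of_notMem (C.inv_mem hc) ht h), hfree⟩
  · refine ⟨t⁻¹, (c * t)⁻¹, Right.one_lt_inv_iff.2 h, ?_, hfree.inv⟩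
    rw [mul_inv_rev]
    exact lt_mul_inv_iff_lt.2
      (hC.lt_of_mem_of_notMem hc (by simpa using ht) (Right.one_lt_inv_iff.2 h))
end

section
/- Let (G,<) be an ordered group in which every convex jump is central, i.e., [H,G] ⊆ N for every convex jump (N,H) of (G,<). Then every convex subgroup of (G,<) is normal in G. -/
/-- A pair `(N, H)` of convex subgroups is a convex jump if `N ⊊ H` and no convex subgroup
lies strictly between `N` and `H`. -/
def Subgroup.IsConvexJump {G : Type*} [Group G] [Preorder G] (N H : Subgroup G) : Prop :=
  N.IsConvex ∧ H.IsConvex ∧ N < H ∧ ∀ K : Subgroup G, K.IsConvex → ¬(N < K ∧ K < H)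

namespace Subgroup

variable {G : Type*} [Group G]

lemma isConvex_sInf [Preorder G] {S : Set (Subgroup G)} (hS : ∀ K ∈ S, K.IsConvex) :
    (sInf S).IsConvex := by
  intro x hx z hz y h₁ h₂
  rw [mem_sInf] at hx hz ⊢
  exact fun K hK ↦ hS K hK x (hx K hK) z (hz K hK) y h₁ h₂

lemma isConvex_sSup_of_directedOn [Preorder G] {S : Set (Subgroup G)} (hne : S.Nonempty)
    (hdir : DirectedOn (· ≤ ·) S) (hS : ∀ K ∈ S, K.IsConvex) : (sSup S).IsConvex := by
  intro x hx z hz y h₁ h₂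
  rw [mem_sSup_of_directedOn hne hdir] at hx hz ⊢
  obtain ⟨K₁, hK₁, hxK₁⟩ := hx
  obtain ⟨K₂, hK₂, hzK₂⟩ := hz
  obtain ⟨K, hK, h₁K, h₂K⟩ := hdir K₁ hK₁ K₂ hK₂
  exact ⟨K, hK, hS K hK x (h₁K hxK₁) z (h₂K hzK₂) y h₁ h₂⟩

def convexClosure [Preorder G] (x : G) : Subgroup G :=
  sInf {K | K.IsConvex ∧ x ∈ K}

/-- For `x ≠ 1` in an ordered group this is the largest convex subgroup not containing `x`,
because convex subgroups form a chain. -/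
def convexAvoiding [Preorder G] (x : G) : Subgroup G :=
  sSup {K | K.IsConvex ∧ x ∉ K}

section Preorder

variable [Preorder G] {x : G} {K : Subgroup G}

lemma isConvex_convexClosure (x : G) : (convexClosure x).IsConvex :=
  isConvex_sInf fun _ hK ↦ hK.1

lemma mem_convexClosure_self (x : G) : x ∈ convexClosure x :=
  mem_sInf.2 fun _ hK ↦ hK.2

lemma convexClosure_le (hK : K.IsConvex) (hx : x ∈ K) : convexClosure x ≤ K :=
  sInf_le ⟨hK, hx⟩

lemma le_convexAvoiding (hK : K.IsConvex) (hx : x ∉ K) : K ≤ convexAvoiding x :=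
  le_sSup ⟨hK, hx⟩

end Preorder

section PartialOrder

variable [PartialOrder G] {x : G}

lemma isConvex_bot : (⊥ : Subgroup G).IsConvex := by
  rintro x rfl z rfl y h₁ h₂
  exact mem_bot.2 (le_antisymm h₂ h₁)

lemma nonempty_convexAvoiding_set (hx : x ≠ 1) : {K : Subgroup G | K.IsConvex ∧ x ∉ K}.Nonempty :=
  ⟨⊥, isConvex_bot, by simpa using hx⟩

end PartialOrder

section OrderedGroup

variable [LinearOrder G] [MulLeftMono G] [MulRightMono G] {x : G} {A B C : Subgroup G}

lemma IsConvex.mem_of_mabs_le (hC : C.IsConvex) {a b : G} (hb : b ∈ C) (h : |a|ₘ ≤ |b|ₘ) :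
    a ∈ C :=
  hC _ (C.inv_mem (mabs_mem_iff.2 hb)) _ (mabs_mem_iff.2 hb) a
    ((inv_le_inv_iff.2 h).trans (inv_mabs_le a)) ((le_mabs_self a).trans h)

lemma IsConvex.le_total (hA : A.IsConvex) (hB : B.IsConvex) : A ≤ B ∨ B ≤ A := by
  refine or_iff_not_imp_left.2 fun hAB b hb ↦ ?_
  obtain ⟨a, ha, haB⟩ := SetLike.not_le_iff_exists.1 hAB
  rcases _root_.le_total |a|ₘ |b|ₘ with h | h
  · exact absurd (hB.mem_of_mabs_le hb h) haB
  · exact hA.mem_of_mabs_le ha h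

lemma directedOn_of_isConvex {S : Set (Subgroup G)} (hS : ∀ K ∈ S, K.IsConvex) :
    DirectedOn (· ≤ ·) S := by
  intro K₁ hK₁ K₂ hK₂
  rcases (hS K₁ hK₁).le_total (hS K₂ hK₂) with h | h
  exacts [⟨K₂, hK₂, h, le_rfl⟩, ⟨K₁, hK₁, le_rfl, h⟩]

lemma isConvex_convexAvoiding (hx : x ≠ 1) : (convexAvoiding x).IsConvex :=
  isConvex_sSup_of_directedOn (nonempty_convexAvoiding_set hx)
    (directedOn_of_isConvex fun _ hK ↦ hK.1) fun _ hK ↦ hK.1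

lemma notMem_convexAvoiding (hx : x ≠ 1) : x ∉ convexAvoiding x := by
  rw [convexAvoiding, mem_sSup_of_directedOn (nonempty_convexAvoiding_set hx)
    (directedOn_of_isConvex fun _ hK ↦ hK.1)]
  rintro ⟨K, ⟨-, hxK⟩, hx⟩
  exact hxK hx

lemma convexAvoiding_le_convexClosure (x : G) : convexAvoiding x ≤ convexClosure x := by
  refine sSup_le fun K ⟨hK, hxK⟩ ↦ ?_
  refine (hK.le_total (isConvex_convexClosure x)).resolve_right fun h ↦ hxK ?_
  exact h (mem_convexClosure_self x)

lemma isConvexJump_convexAvoiding_convexClosure (hx : x ≠ 1) :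
    (convexAvoiding x).IsConvexJump (convexClosure x) := by
  refine ⟨isConvex_convexAvoiding hx, isConvex_convexClosure x,
    (convexAvoiding_le_convexClosure x).lt_of_ne ?_, fun K hK ⟨hNK, hKH⟩ ↦ ?_⟩
  · exact fun h ↦ notMem_convexAvoiding hx (h ▸ mem_convexClosure_self x)
  by_cases hxK : x ∈ K
  · exact hKH.not_ge (convexClosure_le hK hxK)
  · exact hNK.not_ge (le_convexAvoiding hK hxK)

end OrderedGroup

end Subgroup

open Subgroup
open scoped commutatorElement

/-- Let `(G,<)` be an ordered group in which every convex jump is central,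
i.e. `[H,G] ⊆ N` for every convex jump `(N,H)`. Then every convex subgroup of `(G,<)` is
normal in `G`. -/
theorem convex_subgroups_normal_of_central_jumps (G : Type*) [Group G] [LinearOrder G]
    [CovariantClass G G (· * ·) (· < ·)]
    [CovariantClass G G (Function.swap (· * ·)) (· < ·)]
    (hcentral : ∀ N H : Subgroup G, N.IsConvexJump H → ⁅H, (⊤ : Subgroup G)⁆ ≤ N) :
    ∀ C : Subgroup G, C.IsConvex → C.Normal := by
  have : MulLeftMono G := covariantClass_le_of_lt _ _ _
  have : MulRightMono G := covariantClass_le_of_lt _ _ _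
  refine fun C hC ↦ ⟨fun x hx g ↦ ?_⟩
  obtain rfl | hx1 := eq_or_ne x 1
  · simp
  have hcomm : ⁅g, x⁆ ∈ convexAvoiding x := by
    refine hcentral _ _ (isConvexJump_convexAvoiding_convexClosure hx1) ?_
    rw [commutator_comm]
    exact commutator_mem_commutator (mem_top g) (mem_convexClosure_self x)
  have hxC : convexClosure x ≤ C := convexClosure_le hC hx
  rw [show g * x * g⁻¹ = ⁅g, x⁆ * x by group]
  exact C.mul_mem (hxC (convexAvoiding_le_convexClosure x hcomm)) hx
end

section
/- Let (G,<) be an ordered group possessing a convex jump (B,L) such that both B and L are normal subgroups of G and [L,G] ⊄ B. Then G contains a noncommutative free monoid; more precisely, there exist elements a, b ∈ G with 1 < a and 1 < b such that a and b generate a free monoid of rank 2 in G. -/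
/-!
Modulo the convex normal subgroup `B` the order of `G` descends to `G ⧸ B`, in which `L / B` is
archimedean, since `(B, L)` is a jump. Conjugation acts on `L / B` by order automorphisms, and
`[L, G] ⊄ B` provides `g` and `1 < f ∈ L` with `g f g⁻¹ < f` modulo `B`. Telescoping
`f = φ f * ((φ f)⁻¹ * f)` for `φ = conj g` twice against the archimedean property gives a power
`t = g ^ K` with `(t f t⁻¹)² < f`. Conjugation by elements of an archimedean group cannot contract
that much, so no nontrivial power of `t` lies in `L`.

Then `t` and `f t` generate a free monoid: a word `w` evaluates to `d * t ^ |w|` with `d ∈ L`, so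
its length is read off in `G ⧸ L`; and for words of equal length the first letter is read off
from `d`, which lies in `[1, f)` after a leading `t` and in `[f, f²)` after a leading `f t`.
If `t < 1` one passes to the inverses `t⁻¹`, `(f t)⁻¹`.
-/

namespace MulAut

variable {H : Type*} [Mul H] [Preorder H] {φ : MulAut H}

theorem monotone_pow (hφ : Monotone φ) (n : ℕ) : Monotone ⇑(φ ^ n) := by
  induction n with
  | zero => exact monotone_id
  | succ n ih => rw [pow_succ, coe_mul]; exact ih.comp hφ

theorem strictMono_pow (hφ : StrictMono φ) (n : ℕ) : StrictMono ⇑(φ ^ n) := by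
  induction n with
  | zero => exact strictMono_id
  | succ n ih => rw [pow_succ, coe_mul]; exact ih.comp hφ

theorem monotone_pow_apply (hφ : Monotone φ) {x : H} (hx : x ≤ φ x) :
    Monotone fun n : ℕ => (φ ^ n) x :=
  monotone_nat_of_le_succ fun n => by rw [pow_succ, mul_apply]; exact monotone_pow hφ n hx

theorem antitone_pow_apply (hφ : Monotone φ) {x : H} (hx : φ x ≤ x) :
    Antitone fun n : ℕ => (φ ^ n) x :=
  antitone_nat_of_succ_le fun n => by rw [pow_succ, mul_apply]; exact monotone_pow hφ n hx

end MulAut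

section OrderedGroup

variable {H : Type*} [Group H] [LinearOrder H] [MulLeftMono H] [MulRightMono H]

def Subgroup.IsArchimedean (M : Subgroup H) : Prop :=
  ∀ x ∈ M, ∀ y ∈ M, 1 < x → ∃ n : ℕ, y < x ^ n

namespace MulAut

theorem strictMono_conj (g : H) : StrictMono (conj g) := fun x y h => by
  simp only [conj_apply]
  gcongr

variable {φ : MulAut H}

/-- Telescoping: `x = (φ ^ k) x * (φ ^ (k - 1)) d * ⋯ * φ d * d` for `d = (φ x)⁻¹ * x`. -/
theorem pow_le_of_le_pow_apply (hφ : Monotone φ) {x e : H} (hx : 1 ≤ x) {k : ℕ}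
    (he : ∀ i < k, e ≤ (φ ^ i) ((φ x)⁻¹ * x)) : e ^ k ≤ x := by
  have htel : ∀ j ≤ k, (φ ^ j) x * e ^ j ≤ x := by
    intro j hj
    induction j with
    | zero => simp
    | succ j ih =>
      calc (φ ^ (j + 1)) x * e ^ (j + 1) = (φ ^ j) (φ x) * e * e ^ j := by
            rw [pow_succ, mul_apply, pow_succ', mul_assoc]
        _ ≤ (φ ^ j) (φ x) * (φ ^ j) ((φ x)⁻¹ * x) * e ^ j := by gcongr; exact he j hj
        _ = (φ ^ j) x * e ^ j := by rw [← map_mul, mul_inv_cancel_left]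
        _ ≤ x := ih (by omega)
  calc e ^ k = 1 * e ^ k := (one_mul _).symm
    _ ≤ (φ ^ k) x * e ^ k := by gcongr; simpa using monotone_pow hφ k hx
    _ ≤ x := htel k le_rfl

end MulAut

open MulAut

namespace Subgroup.IsArchimedean

variable {M : Subgroup H} (hM : M.IsArchimedean) {φ : MulAut H} (hφ : StrictMono φ)
  (hφM : ∀ x ∈ M, φ x ∈ M) {f : H}
include hM hφ hφM

theorem apply_lt_of_apply_lt (hfM : f ∈ M) (hf : 1 < f) (hφf : φ f < f) :
    φ ((φ f)⁻¹ * f) < (φ f)⁻¹ * f := by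
  obtain ⟨n, hn⟩ := hM _ (M.mul_mem (M.inv_mem (hφM f hfM)) hfM) f hfM (lt_inv_mul_iff_lt.mpr hφf)
  by_contra! h
  refine hn.not_ge (pow_le_of_le_pow_apply hφ.monotone hf.le fun i _ => ?_)
  simpa using monotone_pow_apply hφ.monotone h (Nat.zero_le i)

theorem exists_pow_apply_le (hfM : f ∈ M) (hf : 1 < f) (hφf : φ f < f) :
    ∃ k : ℕ, (φ ^ k) f ≤ (φ f)⁻¹ * f := by
  set r := (φ f)⁻¹ * f
  have hrM : r ∈ M := M.mul_mem (M.inv_mem (hφM f hfM)) hfM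
  have hr : 1 < r := lt_inv_mul_iff_lt.mpr hφf
  have hφr : φ r < r := hM.apply_lt_of_apply_lt hφ hφM hfM hf hφf
  set s := (φ r)⁻¹ * r
  have hsM : s ∈ M := M.mul_mem (M.inv_mem (hφM r hrM)) hrM
  have hs : 1 < s := lt_inv_mul_iff_lt.mpr hφr
  have hφs : φ s < s := hM.apply_lt_of_apply_lt hφ hφM hrM hr hφr
  by_contra! h
  obtain ⟨m, hm⟩ := hM r hrM f hfM hr
  obtain ⟨n, hn⟩ := hM s hsM r hrM hs
  set C := n * m
  have hsC : 1 < (φ ^ C) s := by simpa using strictMono_pow hφ C hs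
  have hup : r < ((φ ^ C) s) ^ C := calc
    r < (φ ^ C) f := h C
    _ < (φ ^ C) (r ^ m) := strictMono_pow hφ C hm
    _ = ((φ ^ C) r) ^ m := map_pow _ _ _
    _ ≤ ((φ ^ C) (s ^ n)) ^ m := pow_le_pow_left' (monotone_pow hφ.monotone C hn.le) m
    _ = ((φ ^ C) s) ^ C := by rw [map_pow, ← pow_mul]
  have hdown : ((φ ^ C) s) ^ (C + 1) ≤ r :=
    pow_le_of_le_pow_apply hφ.monotone hr.le fun i hi =>
      antitone_pow_apply hφ.monotone hφs.le (by omega : i ≤ C)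
  exact (hdown.trans_lt hup).not_ge (pow_le_pow_right' hsC.le C.le_succ)

theorem exists_sq_pow_apply_lt (hfM : f ∈ M) (hf : 1 < f) (hφf : φ f < f) :
    ∃ k : ℕ, ((φ ^ k) f) ^ 2 < f := by
  set r := (φ f)⁻¹ * f
  obtain ⟨k, hk⟩ := hM.exists_pow_apply_le hφ hφM hfM hf hφf
  have hk' : (φ ^ (k + 1)) f < r := by
    rw [pow_succ, mul_apply]
    exact (strictMono_pow hφ k hφf).trans_le hk
  refine ⟨k + 1, ?_⟩
  calc ((φ ^ (k + 1)) f) ^ 2 = (φ ^ (k + 1)) f * (φ ^ (k + 1)) f := sq _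
    _ < (φ ^ (k + 1)) f * r := by gcongr
    _ ≤ φ f * r := by
        gcongr
        simpa using antitone_pow_apply hφ.monotone hφf.le (by omega : 1 ≤ k + 1)
    _ = f := mul_inv_cancel_left _ _

end Subgroup.IsArchimedean

theorem le_sq_conj_of_lt_pow {a ℓ : H} (ha : 1 < a) {n : ℕ} (hℓ : ℓ < a ^ n)
    (hℓ' : ℓ⁻¹ < a ^ n) : a ≤ (ℓ * a * ℓ⁻¹) ^ 2 := by
  by_contra! h
  have hlt : a ^ (2 * (2 * n + 1)) < a ^ (n + (2 * n + 1) + n) := calc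
    a ^ (2 * (2 * n + 1)) = ℓ⁻¹ * ((ℓ * a * ℓ⁻¹) ^ 2) ^ (2 * n + 1) * ℓ := by
        rw [← pow_mul, conj_pow]; group
    _ < ℓ⁻¹ * a ^ (2 * n + 1) * ℓ := by gcongr
    _ < a ^ n * a ^ (2 * n + 1) * a ^ n := Left.mul_lt_mul (by gcongr) hℓ
    _ = a ^ (n + (2 * n + 1) + n) := by rw [← pow_add, ← pow_add]
  exact hlt.not_ge (pow_le_pow_right' ha.le (by omega))

namespace Subgroup.IsArchimedean

variable {M : Subgroup H} (hM : M.IsArchimedean)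
include hM

theorem le_sq_conj {a ℓ : H} (haM : a ∈ M) (hℓM : ℓ ∈ M) (ha : 1 < a) :
    a ≤ (ℓ * a * ℓ⁻¹) ^ 2 := by
  obtain ⟨n₁, h₁⟩ := hM a haM ℓ hℓM ha
  obtain ⟨n₂, h₂⟩ := hM a haM ℓ⁻¹ (M.inv_mem hℓM) ha
  exact le_sq_conj_of_lt_pow ha (n := n₁ + n₂)
    (h₁.trans_le (pow_le_pow_right' ha.le (by omega)))
    (h₂.trans_le (pow_le_pow_right' ha.le (by omega)))

theorem pow_notMem_of_sq_conj_lt {f t : H} (hfM : f ∈ M) (hf : 1 < f)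
    (h : (t * f * t⁻¹) ^ 2 < f) {m : ℕ} (hm : m ≠ 0) : t ^ m ∉ M := by
  intro htm
  have htf : t * f * t⁻¹ ≤ f := by
    have h1 : 1 < t * f * t⁻¹ := by simpa using strictMono_conj t hf
    calc t * f * t⁻¹ = t * f * t⁻¹ * 1 := (mul_one _).symm
      _ ≤ t * f * t⁻¹ * (t * f * t⁻¹) := by gcongr
      _ = (t * f * t⁻¹) ^ 2 := (sq _).symm
      _ ≤ f := h.le
  have hanti := antitone_pow_apply (strictMono_conj t).monotone htf
  have hlt : (t ^ m * f * (t ^ m)⁻¹) ^ 2 < f := calc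
    (t ^ m * f * (t ^ m)⁻¹) ^ 2 ≤ (t * f * t⁻¹) ^ 2 := by
        refine pow_le_pow_left' ?_ 2
        have : (conj t ^ m) f ≤ (conj t ^ 1) f := hanti (Nat.one_le_iff_ne_zero.mpr hm)
        rwa [← map_pow, pow_one, conj_apply, conj_apply] at this
    _ < f := h
  exact hlt.not_ge (hM.le_sq_conj hfM htm hf)

end Subgroup.IsArchimedean

theorem exists_conj_lt_of_not_commute {f g : H} (h : ¬Commute f g) :
    ∃ g' : H, g' * f * g'⁻¹ < f := by
  have hne : g * f * g⁻¹ ≠ f := fun he => h (by rw [mul_inv_eq_iff_eq_mul] at he; exact he.symm)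
  rcases hne.lt_or_gt with hlt | hgt
  · exact ⟨g, hlt⟩
  · refine ⟨g⁻¹, ?_⟩
    simpa [mul_assoc] using strictMono_conj g⁻¹ hgt

theorem exists_one_lt_conj_lt_of_not_commute {f g : H} (h : ¬Commute f g) :
    ∃ f', (f' = f ∨ f' = f⁻¹) ∧ 1 < f' ∧ ∃ g' : H, g' * f' * g'⁻¹ < f' := by
  rcases lt_trichotomy f 1 with hf | rfl | hf
  · exact ⟨f⁻¹, .inr rfl, one_lt_inv'.mpr hf,
      exists_conj_lt_of_not_commute (mt Commute.inv_left_iff.mp h)⟩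
  · exact absurd (Commute.one_left g) h
  · exact ⟨f, .inl rfl, hf, exists_conj_lt_of_not_commute h⟩

end OrderedGroup

section ConvexSubgroup

variable {H : Type*} [Group H] [LinearOrder H] [MulLeftMono H] [MulRightMono H]

def Subgroup.powerBounded (x : H) : Subgroup H where
  carrier := {y | ∃ n : ℕ, (x ^ n)⁻¹ ≤ y ∧ y ≤ x ^ n}
  mul_mem' := by
    rintro y z ⟨m, hym, hyM⟩ ⟨n, hzm, hzM⟩
    refine ⟨m + n, ?_, ?_⟩
    · calc (x ^ (m + n))⁻¹ = (x ^ m)⁻¹ * (x ^ n)⁻¹ := by rw [← mul_inv_rev, ← pow_add, add_comm]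
        _ ≤ y * z := mul_le_mul' hym hzm
    · calc y * z ≤ x ^ m * x ^ n := mul_le_mul' hyM hzM
        _ = x ^ (m + n) := (pow_add _ _ _).symm
  one_mem' := ⟨0, by simp⟩
  inv_mem' := by
    rintro y ⟨n, h₁, h₂⟩
    exact ⟨n, inv_le_inv_iff.mpr h₂, by simpa using inv_le_inv_iff.mpr h₁⟩

theorem Subgroup.powerBounded_isConvex {x : H} (hx : 1 ≤ x) : (powerBounded x).IsConvex := by
  rintro y ⟨m, hm, -⟩ z ⟨n, -, hn⟩ w hyw hwz
  refine ⟨m + n, ?_, hwz.trans (hn.trans (pow_le_pow_right' hx (by omega)))⟩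
  exact (inv_le_inv_iff.mpr (pow_le_pow_right' hx (by omega))).trans (hm.trans hyw)

end ConvexSubgroup

namespace QuotientGroup

variable {G : Type*} [Group G] [LinearOrder G] [MulLeftMono G] [MulRightMono G]
  {B : Subgroup G}

theorem lt_of_le_of_mk_ne (hB : B.IsConvex) {x y x' y' : G} (hxy : x ≤ y)
    (hne : (x : G ⧸ B) ≠ y) (hx : (x' : G ⧸ B) = x) (hy : (y' : G ⧸ B) = y) : x' < y' := by
  rw [QuotientGroup.eq] at hx hy
  refine lt_of_not_ge fun h => hne (QuotientGroup.eq.mpr ?_)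
  refine hB 1 B.one_mem _ (B.mul_mem (B.inv_mem hx) hy) _ (by simpa using hxy) ?_
  calc x⁻¹ * y = (x'⁻¹ * x)⁻¹ * (x'⁻¹ * y') * (y'⁻¹ * y) := by group
    _ ≤ (x'⁻¹ * x)⁻¹ * 1 * (y'⁻¹ * y) := by gcongr; simpa using h
    _ = (x'⁻¹ * x)⁻¹ * (y'⁻¹ * y) := by rw [mul_one]

/-- The order on `G ⧸ B` induced by `G`: a convex `B` makes the cosets order-intervals. -/
noncomputable instance [Fact B.IsConvex] : LinearOrder (G ⧸ B) where
  le p q := ∃ x y : G, (x : G ⧸ B) = p ∧ (y : G ⧸ B) = q ∧ x ≤ y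
  le_refl p := by
    obtain ⟨x, rfl⟩ := mk_surjective p
    exact ⟨x, x, rfl, rfl, le_rfl⟩
  le_trans := by
    rintro _ _ _ ⟨x, y, rfl, rfl, hxy⟩ ⟨y', z, hy', rfl, hyz⟩
    by_cases hne : (x : G ⧸ B) = y
    · exact ⟨y', z, hy'.trans hne.symm, rfl, hyz⟩
    · exact ⟨x, z, rfl, rfl, (lt_of_le_of_mk_ne Fact.out hxy hne rfl hy').le.trans hyz⟩
  le_antisymm := by
    rintro _ _ ⟨x, y, rfl, rfl, hxy⟩ ⟨y', x', hy', hx', hyx⟩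
    by_contra hne
    exact (lt_of_le_of_mk_ne Fact.out hxy hne hx' hy').not_ge hyx
  le_total p q := by
    obtain ⟨x, rfl⟩ := mk_surjective p
    obtain ⟨y, rfl⟩ := mk_surjective q
    exact (le_total x y).imp (fun h => ⟨x, y, rfl, rfl, h⟩) fun h => ⟨y, x, rfl, rfl, h⟩
  toDecidableLE := Classical.decRel _

variable [Fact B.IsConvex]

theorem mk_le_mk_of_le {x y : G} (h : x ≤ y) : (x : G ⧸ B) ≤ y := ⟨x, y, rfl, rfl, h⟩

theorem lt_of_mk_lt_mk {x y : G} (h : (x : G ⧸ B) < y) : x < y :=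
  lt_of_not_ge fun h' => h.not_ge (mk_le_mk_of_le h')

theorem le_or_mem_of_mk_le {x y : G} (h : (x : G ⧸ B) ≤ y) : x ≤ y ∨ x⁻¹ * y ∈ B :=
  h.lt_or_eq.imp (fun h => (lt_of_mk_lt_mk h).le) QuotientGroup.eq.mp

instance [B.Normal] : MulLeftMono (G ⧸ B) where
  elim := by
    rintro p _ _ ⟨x, y, rfl, rfl, h⟩
    obtain ⟨z, rfl⟩ := mk_surjective p
    exact ⟨z * x, z * y, rfl, rfl, by gcongr⟩

instance [B.Normal] : MulRightMono (G ⧸ B) where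
  elim := by
    rintro p _ _ ⟨x, y, rfl, rfl, h⟩
    obtain ⟨z, rfl⟩ := mk_surjective p
    exact ⟨x * z, y * z, rfl, rfl, by gcongr⟩

end QuotientGroup

namespace Subgroup

variable {G : Type*} [Group G] [LinearOrder G] [MulLeftMono G] [MulRightMono G]
  {B L : Subgroup G} [Fact B.IsConvex]

theorem IsConvex.mem_of_mk_le_of_mk_le (hL : L.IsConvex) (hBL : B ≤ L) {w w' z : G}
    (hw' : w' ∈ L) (hw : w ∈ L) (h₁ : (w' : G ⧸ B) ≤ z) (h₂ : (z : G ⧸ B) ≤ w) : z ∈ L := by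
  rcases QuotientGroup.le_or_mem_of_mk_le h₁ with h₁ | h₁
  · rcases QuotientGroup.le_or_mem_of_mk_le h₂ with h₂ | h₂
    · exact hL w' hw' w hw z h₁ h₂
    · simpa using L.mul_mem hw (L.inv_mem (hBL h₂))
  · simpa using L.mul_mem hw' (hBL h₁)

theorem IsConvexJump.isArchimedean_map [B.Normal] (hjump : B.IsConvexJump L) :
    (L.map (QuotientGroup.mk' B)).IsArchimedean := by
  rintro _ ⟨x, hxL, rfl⟩ _ ⟨y, hyL, rfl⟩ hx
  obtain ⟨-, hLc, hBL, hmax⟩ := hjump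
  set C := (powerBounded (x : G ⧸ B)).comap (QuotientGroup.mk' B)
  have hCL : C ≤ L := by
    rintro z ⟨n, h₁, h₂⟩
    exact hLc.mem_of_mk_le_of_mk_le hBL.le (L.inv_mem (L.pow_mem hxL n)) (L.pow_mem hxL n)
      (by simpa using h₁) (by simpa using h₂)
  have hBC : B < C := by
    refine SetLike.lt_iff_le_and_exists.mpr ⟨fun b hb => mem_comap.mpr ⟨0, ?_⟩,
      x, mem_comap.mpr ⟨1, ?_⟩, fun hxB => hx.ne' ((QuotientGroup.eq_one_iff x).mpr hxB)⟩
    · simp [(QuotientGroup.eq_one_iff b).mpr hb]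
    · simpa using (inv_le_one'.mpr hx.le).trans hx.le
  have hCeq : C = L := by
    by_contra hne
    exact hmax C ((powerBounded_isConvex hx.le).comap fun _ _ => QuotientGroup.mk_le_mk_of_le)
      ⟨hBC, lt_of_le_of_ne hCL hne⟩
  obtain ⟨n, -, hn⟩ := hCeq ▸ hyL
  exact ⟨n + 1, hn.trans_lt (pow_lt_pow_right' hx n.lt_succ_self)⟩

end Subgroup

theorem FreeMonoid.hom_eq_pow_length {α M : Type*} [Monoid M] {f : FreeMonoid α →* M} {m : M}
    (hf : ∀ i, f (of i) = m) (w : FreeMonoid α) : f w = m ^ w.length := by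
  induction w using FreeMonoid.inductionOn' with
  | one => simp [length_one]
  | of_mul i w ih => rw [map_mul, hf, ih, length_mul, length_of, add_comm, pow_succ']

section Freeness

variable {G : Type*} [Group G] [LinearOrder G] [MulLeftMono G] [MulRightMono G]
  {ψ : FreeMonoid (Fin 2) →* G} {a t : G}

theorem FreeMonoid.pow_length_le_apply_and_apply_lt (hψ₀ : ψ (.of 0) = t)
    (hψ₁ : ψ (.of 1) = a * t) (ha : 1 < a) (hta : t * a ^ 2 * t⁻¹ < a) (w : FreeMonoid (Fin 2)) :
    t ^ w.length ≤ ψ w ∧ ψ w < a ^ 2 * t ^ w.length := by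
  have hstep : ∀ n : ℕ, t * (a ^ 2 * t ^ n) < a * t ^ (n + 1) := fun n => calc
    t * (a ^ 2 * t ^ n) = t * a ^ 2 * t⁻¹ * t ^ (n + 1) := by group
    _ < a * t ^ (n + 1) := by gcongr
  induction w using FreeMonoid.inductionOn' with
  | one => exact ⟨by simp, by simpa using one_lt_pow' ha two_ne_zero⟩
  | of_mul i w ih =>
    obtain ⟨ih₁, ih₂⟩ := ih
    rw [map_mul, FreeMonoid.length_mul, FreeMonoid.length_of, add_comm, pow_succ']
    match i with
    | 0 =>
      rw [hψ₀]
      refine ⟨by gcongr, (mul_lt_mul_right ih₂ t).trans ((hstep _).trans_le ?_)⟩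
      rw [pow_succ']
      gcongr
      exact le_self_pow ha.le two_ne_zero
    | 1 =>
      rw [hψ₁]
      refine ⟨?_, ?_⟩
      · calc t * t ^ w.length = 1 * (t * t ^ w.length) := (one_mul _).symm
          _ ≤ a * t * ψ w := by rw [mul_assoc]; gcongr
      · calc a * t * ψ w < a * (t * (a ^ 2 * t ^ w.length)) := by rw [mul_assoc]; gcongr
          _ < a * (a * t ^ (w.length + 1)) := mul_lt_mul_right (hstep _) a
          _ = a ^ 2 * (t * t ^ w.length) := by rw [← mul_assoc, ← sq, ← pow_succ']

theorem FreeMonoid.eq_of_length_eq_of_apply_eq (hψ₀ : ψ (.of 0) = t)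
    (hψ₁ : ψ (.of 1) = a * t) (ha : 1 < a) (hta : t * a ^ 2 * t⁻¹ < a)
    {w₁ w₂ : FreeMonoid (Fin 2)} (hlen : w₁.length = w₂.length) (h : ψ w₁ = ψ w₂) : w₁ = w₂ := by
  have hlt : ∀ u v : FreeMonoid (Fin 2), u.length = v.length → t * ψ u < a * t * ψ v := by
    intro u v huv
    have hu := (FreeMonoid.pow_length_le_apply_and_apply_lt hψ₀ hψ₁ ha hta u).2
    have hv := (FreeMonoid.pow_length_le_apply_and_apply_lt hψ₀ hψ₁ ha hta v).1
    calc t * ψ u < t * (a ^ 2 * t ^ u.length) := by gcongr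
      _ = t * a ^ 2 * t⁻¹ * (t * t ^ v.length) := by rw [huv]; group
      _ < a * (t * t ^ v.length) := by gcongr
      _ ≤ a * t * ψ v := by rw [mul_assoc]; gcongr
  induction w₁ using FreeMonoid.inductionOn' generalizing w₂ with
  | one => exact (FreeMonoid.length_eq_zero.mp hlen.symm).symm
  | of_mul i u ih =>
    cases w₂ with
    | one => simp [FreeMonoid.length_mul] at hlen
    | of_mul j v =>
      simp only [FreeMonoid.length_mul, FreeMonoid.length_of, add_left_cancel_iff] at hlen
      rw [map_mul, map_mul] at h
      match i, j with
      | 0, 0 | 1, 1 => rw [ih hlen (mul_left_cancel h)]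
      | 0, 1 => rw [hψ₀, hψ₁] at h; exact absurd h (hlt u v hlen).ne
      | 1, 0 => rw [hψ₀, hψ₁] at h; exact absurd h.symm (hlt v u hlen.symm).ne

theorem generatesFreeMonoid2_of_sq_conj_lt {L : Subgroup G} [L.Normal] (haL : a ∈ L) (ha : 1 < a)
    (hta : (t * a * t⁻¹) ^ 2 < a) (ht : ∀ n ≠ 0, t ^ n ∉ L) : GeneratesFreeMonoid2 t (a * t) := by
  have hinf : Function.Injective fun n : ℕ => (t : G ⧸ L) ^ n := by
    refine injective_pow_iff_not_isOfFinOrder.mpr fun h => ?_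
    obtain ⟨n, hn, htn⟩ := isOfFinOrder_iff_pow_eq_one.mp h
    exact ht n hn.ne' ((QuotientGroup.eq_one_iff _).mp (by simpa using htn))
  have hlen := FreeMonoid.hom_eq_pow_length (m := (t : G ⧸ L))
    (f := (QuotientGroup.mk' L).comp (FreeMonoid.lift fun i : Fin 2 => if i = 0 then t else a * t))
    (by intro i; fin_cases i <;> simp [(QuotientGroup.eq_one_iff a).mpr haL])
  intro w₁ w₂ h
  refine FreeMonoid.eq_of_length_eq_of_apply_eq rfl rfl ha (by rwa [conj_pow] at hta) (hinf ?_) h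
  have hmk := congrArg (QuotientGroup.mk' L) h
  rwa [← MonoidHom.comp_apply, ← MonoidHom.comp_apply, hlen, hlen] at hmk

theorem exists_generatesFreeMonoid2_of_sq_conj_lt {L : Subgroup G} [L.Normal] (hL : L.IsConvex)
    (haL : a ∈ L) (ha : 1 < a) (hta : (t * a * t⁻¹) ^ 2 < a) (ht : ∀ n ≠ 0, t ^ n ∉ L) :
    ∃ x y : G, 1 < x ∧ 1 < y ∧ GeneratesFreeMonoid2 x y := by
  have hfree := generatesFreeMonoid2_of_sq_conj_lt haL ha hta ht
  have htL : t ∉ L := by simpa using ht 1 one_ne_zero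
  rcases (show t ≠ 1 by rintro rfl; exact htL L.one_mem).lt_or_gt with ht1 | ht1
  · have hat : a < t⁻¹ := lt_of_not_ge fun h =>
      htL (by simpa using L.inv_mem (hL 1 L.one_mem a haL t⁻¹ (one_le_inv'.mpr ht1.le) h))
    refine ⟨t⁻¹, (a * t)⁻¹, one_lt_inv'.mpr ht1, one_lt_inv'.mpr ?_, hfree.inv⟩
    simpa using mul_lt_mul_left hat t
  · exact ⟨t, a * t, ht1, one_lt_mul' ha ht1, hfree⟩

end Freeness

open scoped commutatorElement

/-- Let `(G,<)` be an ordered group possessing a convex jump `(B, L)` such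
that both `B` and `L` are normal in `G` and `[L,G] ⊄ B`. Then `G` contains a noncommutative
free monoid: there exist `a, b ∈ G` with `1 < a` and `1 < b` generating a free monoid of
rank 2. -/
theorem free_monoid_of_noncentral_normal_convex_jump (G : Type*) [Group G] [LinearOrder G]
    [CovariantClass G G (· * ·) (· < ·)]
    [CovariantClass G G (Function.swap (· * ·)) (· < ·)]
    (B L : Subgroup G) (hjump : B.IsConvexJump L)
    (hBnormal : B.Normal) (hLnormal : L.Normal)
    (hnc : ¬ ⁅L, (⊤ : Subgroup G)⁆ ≤ B) :
    ∃ a b : G, 1 < a ∧ 1 < b ∧ GeneratesFreeMonoid2 a b := by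
  have := mulLeftMono_of_mulLeftStrictMono G
  have := mulRightMono_of_mulRightStrictMono G
  have : Fact B.IsConvex := ⟨hjump.1⟩
  set M := L.map (QuotientGroup.mk' B)
  have hM : M.IsArchimedean := hjump.isArchimedean_map
  obtain ⟨f₀, hf₀L, g₀, -, hfg₀⟩ : ∃ f ∈ L, ∃ g ∈ (⊤ : Subgroup G), ⁅f, g⁆ ∉ B := by
    simpa only [Subgroup.commutator_le, not_forall, exists_prop] using hnc
  have hnc' : ¬Commute (f₀ : G ⧸ B) g₀ := by
    rwa [← commutatorElement_eq_one_iff_commute, ← QuotientGroup.mk'_apply,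
      ← QuotientGroup.mk'_apply, ← map_commutatorElement, QuotientGroup.mk'_apply,
      QuotientGroup.eq_one_iff]
  obtain ⟨f', hf', hf, g', hg'⟩ := exists_one_lt_conj_lt_of_not_commute hnc'
  obtain ⟨f, hfL, rfl⟩ : ∃ f ∈ L, (f : G ⧸ B) = f' := by
    rcases hf' with rfl | rfl
    exacts [⟨f₀, hf₀L, rfl⟩, ⟨f₀⁻¹, L.inv_mem hf₀L, rfl⟩]
  obtain ⟨g, rfl⟩ := QuotientGroup.mk_surjective g'
  have hfM : (f : G ⧸ B) ∈ M := Subgroup.mem_map_of_mem _ hfL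
  obtain ⟨K, hK⟩ := hM.exists_sq_pow_apply_lt (MulAut.strictMono_conj _)
    (fun x hx => (hLnormal.map _ (QuotientGroup.mk'_surjective B)).conj_mem x hx _) hfM hf
    (by rwa [MulAut.conj_apply])
  rw [← map_pow MulAut.conj, MulAut.conj_apply] at hK
  refine exists_generatesFreeMonoid2_of_sq_conj_lt hjump.2.1 hfL (t := g ^ K)
    (QuotientGroup.lt_of_mk_lt_mk hf) (QuotientGroup.lt_of_mk_lt_mk hK)
    fun m hm htm => hM.pow_notMem_of_sq_conj_lt hfM hf hK hm (Subgroup.mem_map_of_mem _ htm)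
end
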